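/- arXiv:math/0507536 — 13 statements merged into one kernel-verified Lean document; each statement's English description precedes it below -/
import Mathlib

section
/- For every real x ≥ 1/e and every natural number m with m ≥ e·x, the tail of the exponential series satisfies ∑_{r ≥ m} x^r/r! ≤ (e^{1/2}/(√(2π)(e−1))) · x^{-1/2}. -/
/-! Beyond its first term `x^m/m!`, the tail is dominated by a geometric series of ratio
`x/(m+1) ≤ 1/e`, which costs the factor `e/(e-1)`. Stirling's lower bound
`m! ≥ √(2πm) (m/e)^m` together with `x ≤ m/e` gives `x^m/m! ≤ 1/√(2πm) ≤ 1/√(2πex)`. -/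

open Real Nat

theorem pow_add_div_factorial_le {x : ℝ} (hx : 0 ≤ x) (m r : ℕ) :
    x ^ (m + r) / (m + r)! ≤ x ^ m / m ! * (x / (m + 1)) ^ r := by
  have hfac : (m ! : ℝ) * (m + 1) ^ r ≤ (m + r)! := mod_cast factorial_mul_pow_le_factorial
  calc x ^ (m + r) / (m + r)! ≤ x ^ (m + r) / (m ! * (m + 1) ^ r) := by gcongr
    _ = x ^ m / m ! * (x / (m + 1)) ^ r := by rw [pow_add, div_pow]; field_simp

theorem tsum_pow_add_div_factorial_le {x q : ℝ} {m : ℕ} (hx : 0 ≤ x) (hq : q < 1)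
    (hxq : x ≤ q * (m + 1)) :
    ∑' r : ℕ, x ^ (m + r) / (m + r)! ≤ x ^ m / m ! * (1 - q)⁻¹ := by
  have hratio : x / (m + 1) ≤ q := (div_le_iff₀ (by positivity)).mpr hxq
  have hq0 : 0 ≤ q := (div_nonneg hx (by positivity)).trans hratio
  have hdom (r : ℕ) : x ^ (m + r) / (m + r)! ≤ x ^ m / m ! * q ^ r :=
    (pow_add_div_factorial_le hx m r).trans (by gcongr)
  have hgeom : Summable fun r : ℕ => x ^ m / m ! * q ^ r :=
    (summable_geometric_of_lt_one hq0 hq).mul_left _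
  calc ∑' r : ℕ, x ^ (m + r) / (m + r)!
      ≤ ∑' r : ℕ, x ^ m / m ! * q ^ r :=
        (hgeom.of_nonneg_of_le (fun r => by positivity) hdom).tsum_le_tsum hdom hgeom
    _ = x ^ m / m ! * (1 - q)⁻¹ := by rw [tsum_mul_left, tsum_geometric_of_lt_one hq0 hq]

theorem pow_div_factorial_le_inv_sqrt {x : ℝ} {m : ℕ} (hx : 0 < x) (hm : exp 1 * x ≤ m) :
    x ^ m / m ! ≤ (√(2 * π * (exp 1 * x)))⁻¹ := by
  have hmx : x ≤ m / exp 1 := (le_div_iff₀ (exp_pos 1)).mpr (by linarith)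
  have hsqrt : 0 < √(2 * π * (exp 1 * x)) := by positivity
  have hsqrt_le : √(2 * π * (exp 1 * x)) ≤ √(2 * π * m) := by gcongr
  rw [div_le_iff₀ (by positivity), inv_mul_eq_div, le_div_iff₀ hsqrt]
  calc x ^ m * √(2 * π * (exp 1 * x)) ≤ (m / exp 1) ^ m * √(2 * π * m) := by gcongr
    _ ≤ m ! := by rw [mul_comm]; exact Stirling.le_factorial_stirling m

/-- For every real `x ≥ 1/e` and natural `m ≥ e·x`, the tail of the
exponential series satisfies `∑_{r ≥ m} x^r/r! ≤ (e^{1/2}/(√(2π)(e−1))) · x^{-1/2}`. -/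
theorem exp_tail_bound (x : ℝ) (hx : 1 / Real.exp 1 ≤ x)
    (m : ℕ) (hm : Real.exp 1 * x ≤ (m : ℝ)) :
    ∑' r : ℕ, x ^ (m + r) / (Nat.factorial (m + r) : ℝ) ≤
      (Real.exp (1 / 2) / (Real.sqrt (2 * Real.pi) * (Real.exp 1 - 1))) *
        x ^ (-(1 / 2) : ℝ) := by
  have he : 1 < exp 1 := one_lt_exp_iff.mpr one_pos
  have hx0 : 0 < x := lt_of_lt_of_le (by positivity) hx
  have hratio : x ≤ (exp 1)⁻¹ * (m + 1) := by
    rw [inv_mul_eq_div, le_div_iff₀ (exp_pos 1)]; linarith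
  have hgeom : (1 - (exp 1)⁻¹)⁻¹ = exp 1 / (exp 1 - 1) := by field_simp
  calc ∑' r : ℕ, x ^ (m + r) / (m + r)!
      ≤ x ^ m / m ! * (1 - (exp 1)⁻¹)⁻¹ :=
        tsum_pow_add_div_factorial_le hx0.le (inv_lt_one_of_one_lt₀ he) hratio
    _ ≤ (√(2 * π * (exp 1 * x)))⁻¹ * (exp 1 / (exp 1 - 1)) := by
        rw [hgeom]; gcongr; exact pow_div_factorial_le_inv_sqrt hx0 hm
    _ = exp (1 / 2) / (√(2 * π) * (exp 1 - 1)) * x ^ (-(1 / 2) : ℝ) := by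
        rw [rpow_neg hx0.le, ← sqrt_eq_rpow, exp_half,
          sqrt_mul (by positivity), sqrt_mul (exp_pos 1).le]
        have he1 : 0 < exp 1 - 1 := by linarith
        field_simp
        linear_combination -sq_sqrt (exp_pos 1).le
end

section
/- In the hyperbolic plane, consider a geodesic triangle with vertices A, B, C, angles θ_A, θ_B, θ_C at these vertices and opposite side lengths a, b, c. If the side length c = d(A,B) satisfies c ≥ log((cos θ_A + 1)/(1 − cos θ_A)) with 0 < θ_A < π, then θ_B ≤ θ_A. -/
open Real

set_option maxHeartbeats 1600000 in
/-- In the hyperbolic plane (curvature `−1`), for a geodesic triangle with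
vertices `A, B, C`, angles `θA, θB, θC ∈ (0,π)` and opposite side lengths `a, b, c > 0`
(encoded by the hyperbolic cosine rule at each vertex): if the side `c = d(A,B)` satisfies
`c ≥ log((cos θA + 1)/(1 − cos θA))`, then `θB ≤ θA`. -/
theorem hyperbolic_angle_comparison
    (a b c θA θB θC : ℝ)
    (ha : 0 < a) (hb : 0 < b) (hc : 0 < c)
    (hθA : θA ∈ Set.Ioo 0 π) (hθB : θB ∈ Set.Ioo 0 π) (hθC : θC ∈ Set.Ioo 0 π)
    (lawA : Real.sinh b * Real.sinh c * Real.cos θA = Real.cosh b * Real.cosh c - Real.cosh a)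
    (lawB : Real.sinh a * Real.sinh c * Real.cos θB = Real.cosh a * Real.cosh c - Real.cosh b)
    (lawC : Real.sinh a * Real.sinh b * Real.cos θC = Real.cosh a * Real.cosh b - Real.cosh c)
    (hlen : Real.log ((Real.cos θA + 1) / (1 - Real.cos θA)) ≤ c) :
    θB ≤ θA := by
  obtain ⟨hA0, hAπ⟩ := hθA
  obtain ⟨hB0, hBπ⟩ := hθB
  obtain ⟨hC0, hCπ⟩ := hθC
  have hsa : 0 < Real.sinh a := Real.sinh_pos_iff.2 ha
  have hsb : 0 < Real.sinh b := Real.sinh_pos_iff.2 hb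
  have hsc : 0 < Real.sinh c := Real.sinh_pos_iff.2 hc
  have hca : 1 ≤ Real.cosh a := Real.one_le_cosh a
  have hcb : 1 ≤ Real.cosh b := Real.one_le_cosh b
  have hcc : 1 ≤ Real.cosh c := Real.one_le_cosh c
  have hcosA1 : Real.cos θA < 1 := by
    have := Real.cos_lt_cos_of_nonneg_of_le_pi le_rfl hAπ.le hA0
    simpa using this
  have hcosAneg : -1 < Real.cos θA := by
    have := Real.cos_lt_cos_of_nonneg_of_le_pi hA0.le le_rfl hAπ
    simpa using this
  have hcosCneg : -1 < Real.cos θC := by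
    have := Real.cos_lt_cos_of_nonneg_of_le_pi hC0.le le_rfl hCπ
    simpa using this
  -- key: sinh b * sinh c * cos θA ≤ cosh b * (cosh c - 1), hence cosh b ≤ cosh a
  have key : Real.sinh b * Real.sinh c * Real.cos θA ≤ Real.cosh b * (Real.cosh c - 1) := by
    rcases le_or_gt (Real.cos θA) 0 with h0 | h0
    · nlinarith [mul_pos hsb hsc]
    · -- from hlen: (1+t)/(1-t) ≤ exp c, with t = cos θA
      set t := Real.cos θA with ht
      have hX : 0 < (t + 1) / (1 - t) := div_pos (by linarith) (by linarith)
      have hXle : (t + 1) / (1 - t) ≤ Real.exp c := by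
        have := Real.exp_le_exp.2 hlen
        rwa [Real.exp_log hX] at this
      have hineq : t * (Real.exp c + 1) ≤ Real.exp c - 1 := by
        have h1t : 0 < 1 - t := by linarith
        rw [div_le_iff₀ h1t] at hXle
        nlinarith
      have he1 : 1 < Real.exp c := by
        have := Real.exp_lt_exp.2 hc; simpa using this
      have hstep : Real.sinh c * t ≤ Real.cosh c - 1 := by
        have e1 : Real.sinh c * (2 * Real.exp c) = Real.exp c ^ 2 - 1 := by
          rw [Real.sinh_eq, Real.exp_neg]; field_simp
        have e2 : (Real.cosh c - 1) * (2 * Real.exp c) = Real.exp c ^ 2 + 1 - 2 * Real.exp c := by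
          rw [Real.cosh_eq, Real.exp_neg]; field_simp
        have hm : t * (Real.exp c + 1) * (Real.exp c - 1) ≤ (Real.exp c - 1) * (Real.exp c - 1) :=
          mul_le_mul_of_nonneg_right hineq (by linarith)
        have hmul : Real.sinh c * t * (2 * Real.exp c) ≤ (Real.cosh c - 1) * (2 * Real.exp c) := by
          nlinarith
        exact le_of_mul_le_mul_right hmul (by positivity)
      have hsbcb : Real.sinh b ≤ Real.cosh b := by
        nlinarith [Real.cosh_sq b, Real.sinh_sq b, Real.cosh_pos b]
      calc Real.sinh b * Real.sinh c * t = Real.sinh b * (Real.sinh c * t) := by ring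
        _ ≤ Real.cosh b * (Real.sinh c * t) :=
            mul_le_mul_of_nonneg_right hsbcb (mul_nonneg hsc.le h0.le)
        _ ≤ Real.cosh b * (Real.cosh c - 1) :=
            mul_le_mul_of_nonneg_left hstep (Real.cosh_pos b).le
  have hcoshba : Real.cosh b ≤ Real.cosh a := by nlinarith
  have hba : b ≤ a := by
    have : |b| ≤ |a| := Real.cosh_le_cosh.1 hcoshba
    rwa [abs_of_pos hb, abs_of_pos ha] at this
  -- triangle inequality: cosh c < cosh (a+b)
  have htri : Real.cosh c < Real.cosh (a + b) := by
    rw [Real.cosh_add]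
    have h1 := mul_lt_mul_of_pos_left hcosCneg (mul_pos hsa hsb)
    linarith [h1, lawC]
  -- compare cosines
  have hsab : 0 ≤ Real.sinh (a - b) := Real.sinh_nonneg_iff.2 (by linarith)
  have hD : Real.cos θA * (Real.sinh a * Real.sinh b * Real.sinh c)
      ≤ Real.cos θB * (Real.sinh a * Real.sinh b * Real.sinh c) := by
    have e1 : Real.cos θA * (Real.sinh a * Real.sinh b * Real.sinh c)
        = Real.sinh a * (Real.cosh b * Real.cosh c - Real.cosh a) := by
      rw [← lawA]; ring
    have e2 : Real.cos θB * (Real.sinh a * Real.sinh b * Real.sinh c)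
        = Real.sinh b * (Real.cosh a * Real.cosh c - Real.cosh b) := by
      rw [← lawB]; ring
    rw [e1, e2]
    have hfact : 0 ≤ Real.sinh (a - b) * (Real.cosh (a + b) - Real.cosh c) :=
      mul_nonneg hsab (by linarith)
    rw [Real.cosh_add] at hfact
    have ia := Real.cosh_sq_sub_sinh_sq a
    have ib := Real.cosh_sq_sub_sinh_sq b
    have hid : Real.sinh b * (Real.cosh a * Real.cosh c - Real.cosh b)
        - Real.sinh a * (Real.cosh b * Real.cosh c - Real.cosh a)
        = Real.sinh (a - b) * (Real.cosh a * Real.cosh b + Real.sinh a * Real.sinh b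
            - Real.cosh c) := by
      rw [Real.sinh_sub]
      linear_combination (-(Real.sinh a * Real.cosh a)) * ib
        + (Real.sinh b * Real.cosh b) * ia
    linarith [hid, hfact]
  have hcos : Real.cos θA ≤ Real.cos θB :=
    le_of_mul_le_mul_right hD (by positivity)
  by_contra h
  push_neg at h
  have := Real.cos_lt_cos_of_nonneg_of_le_pi hA0.le hBπ.le h
  linarith
end

section
/- In the hyperbolic plane, for any geodesic triangle with vertex angle θ_A ∈ (0, π) at A and opposite side length a, adjacent side lengths b and c: a ≥ b + c − log(2/(1 − cos θ_A)). Consequently, if max(b,c) ≥ log(2/(1 − cos θ_A)), then a ≥ min(b,c). -/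
open Real

/-- Key algebraic inequality. -/
lemma hyperbolic_defect_aux (E u D k M : ℝ) (hk0 : 0 < k) (hk2 : k ≤ 2)
    (hu : 0 < u) (hkM : k * M = 2) (hD : 1 ≤ D) (huk : u ≤ k / 2) :
    (E * (k / 2) + u * M) / 2 ≤ D + k / 2 * ((E + u) / 2 - D) := by
  have hM : 0 < M := by nlinarith
  nlinarith [mul_nonneg (mul_nonneg hk0.le (by linarith : (0:ℝ) ≤ 2 - k))
      (by linarith : 0 ≤ k / 2 - u),
    mul_nonneg (by linarith : (0:ℝ) ≤ D - 1) (by linarith : (0:ℝ) ≤ 2 - k),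
    mul_nonneg hu.le (by linarith : (0:ℝ) ≤ 2 - k)]

/-- In the hyperbolic plane (curvature `−1`), for any geodesic triangle
with vertex angle `θA ∈ (0,π)` at `A`, opposite side `a` and adjacent sides `b, c`
(encoded by the hyperbolic cosine rule at each vertex):
`a ≥ b + c − log(2/(1 − cos θA))`; consequently, if `max(b,c) ≥ log(2/(1 − cos θA))`,
then `a ≥ min(b,c)`. -/
theorem hyperbolic_defect_bound
    (a b c θA θB θC : ℝ)
    (ha : 0 < a) (hb : 0 < b) (hc : 0 < c)
    (hθA : θA ∈ Set.Ioo 0 π) (hθB : θB ∈ Set.Ioo 0 π) (hθC : θC ∈ Set.Ioo 0 π)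
    (lawA : Real.sinh b * Real.sinh c * Real.cos θA = Real.cosh b * Real.cosh c - Real.cosh a)
    (lawB : Real.sinh a * Real.sinh c * Real.cos θB = Real.cosh a * Real.cosh c - Real.cosh b)
    (lawC : Real.sinh a * Real.sinh b * Real.cos θC = Real.cosh a * Real.cosh b - Real.cosh c) :
    b + c - Real.log (2 / (1 - Real.cos θA)) ≤ a ∧
      (Real.log (2 / (1 - Real.cos θA)) ≤ max b c → min b c ≤ a) := by
  obtain ⟨hA0, hAπ⟩ := hθA
  have hcos1 : Real.cos θA < 1 := by
    have h := Real.cos_lt_cos_of_nonneg_of_le_pi (le_refl 0) hAπ.le hA0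
    simpa using h
  have hcosm1 : -1 ≤ Real.cos θA := Real.neg_one_le_cos θA
  set k : ℝ := 1 - Real.cos θA with hkdef
  have hk0 : 0 < k := by simp only [hkdef]; linarith
  have hk2 : k ≤ 2 := by simp only [hkdef]; linarith
  set L : ℝ := Real.log (2 / k) with hLdef
  have hL : Real.exp L = 2 / k := Real.exp_log (by positivity)
  -- rewrite the law at A
  have hcosha : Real.cosh a
      = Real.cosh (b - c) + k / 2 * (Real.cosh (b + c) - Real.cosh (b - c)) := by
    have h1 := Real.cosh_add b c
    have h2 := Real.cosh_sub b c
    have hk : Real.cos θA = 1 - k := by simp [hkdef]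
    rw [hk] at lawA
    linear_combination lawA - (k/2)*h1 - (1-k/2)*h2
  have part1 : b + c - L ≤ a := by
    rcases le_or_gt (b + c) L with h | h
    · linarith
    · -- main case
      have hE : (0:ℝ) < Real.exp (b + c) := Real.exp_pos _
      have hu : (0:ℝ) < Real.exp (-(b + c)) := Real.exp_pos _
      have huE : Real.exp (b + c) * Real.exp (-(b + c)) = 1 := by
        rw [Real.exp_neg]; exact mul_inv_cancel₀ hE.ne'
      have hesk : 2 / k ≤ Real.exp (b + c) := by
        rw [← hL]; exact Real.exp_le_exp.mpr h.le
      have huk : Real.exp (-(b + c)) ≤ k / 2 := by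
        have h1 : 2 / k * Real.exp (-(b + c)) ≤ 1 := by
          calc 2 / k * Real.exp (-(b + c))
              ≤ Real.exp (b + c) * Real.exp (-(b + c)) :=
                mul_le_mul_of_nonneg_right hesk hu.le
            _ = 1 := huE
        rw [div_mul_eq_mul_div, div_le_one hk0] at h1
        linarith
      have hexp1 : Real.exp (b + c - L) = Real.exp (b + c) * (k / 2) := by
        rw [Real.exp_sub, hL]
        field_simp
      have hexp2 : Real.exp (-(b + c - L)) = Real.exp (-(b + c)) * (2 / k) := by
        rw [neg_sub, Real.exp_sub, hL, div_eq_mul_inv, ← Real.exp_neg]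
        ring
      have key : Real.cosh (b + c - L) ≤ Real.cosh a := by
        rw [Real.cosh_eq, hexp1, hexp2, hcosha, Real.cosh_eq (b + c)]
        exact hyperbolic_defect_aux (Real.exp (b + c)) (Real.exp (-(b + c)))
          (Real.cosh (b - c)) k (2 / k) hk0 hk2 hu (by field_simp)
          (Real.one_le_cosh _) huk
      have habs : |b + c - L| ≤ |a| := Real.cosh_le_cosh.mp key
      have : b + c - L ≤ |b + c - L| := le_abs_self _
      have ha' : |a| = a := abs_of_pos ha
      linarith
  refine ⟨part1, fun hmax => ?_⟩
  have hmm : min b c + max b c = b + c := min_add_max b c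
  linarith
end

section
/- In the hyperbolic plane, if a geodesic triangle has angle θ_A > π/2 at vertex A and the side from A to B has length c ≥ log(√2 + 1), then the angle at B satisfies θ_B < (π − θ_A)/2. -/
open Real

/-- In the hyperbolic plane (curvature `−1`), consider a geodesic triangle
with angles `θA, θB, θC ∈ (0,π)` (whose sum is less than `π`) satisfying the second (dual)
hyperbolic cosine rule `sin θB · sin θA · cosh c = cos θC + cos θB · cos θA`, where `c` is the
length of the side from `A` to `B`. If `θA > π/2` and `c ≥ log(√2 + 1)`, then
`θB < (π − θA)/2`. -/
theorem hyperbolic_obtuse_angle_bound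
    (c θA θB θC : ℝ) (hc : 0 < c)
    (hθA : θA ∈ Set.Ioo 0 π) (hθB : θB ∈ Set.Ioo 0 π) (hθC : θC ∈ Set.Ioo 0 π)
    (hsum : θA + θB + θC < π)
    (dualLaw : Real.sin θB * Real.sin θA * Real.cosh c = Real.cos θC + Real.cos θB * Real.cos θA)
    (hobtuse : π / 2 < θA)
    (hlen : Real.log (Real.sqrt 2 + 1) ≤ c) :
    θB < (π - θA) / 2 := by
  by_contra h
  push_neg at h
  obtain ⟨hA0, hAπ⟩ := hθA
  obtain ⟨hB0, hBπ⟩ := hθB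
  obtain ⟨hC0, hCπ⟩ := hθC
  set α := π - θA with hαdef
  have hα0 : 0 < α := by simp only [hαdef]; linarith
  have hα2 : α < π / 2 := by simp only [hαdef]; linarith
  have hBα : θB < α := by simp only [hαdef] at *; linarith
  have hBhalf : α / 2 ≤ θB := by simp only [hαdef] at *; linarith
  have s2 : Real.sqrt 2 ^ 2 = 2 := Real.sq_sqrt (by norm_num)
  have s2gt : 1 < Real.sqrt 2 := by nlinarith [Real.sqrt_nonneg 2]
  -- cosh c ≥ √2
  have hcosh : Real.sqrt 2 ≤ Real.cosh c := by
    have h1 : Real.cosh (Real.log (Real.sqrt 2 + 1)) = Real.sqrt 2 := by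
      rw [Real.cosh_eq, Real.exp_log (by positivity), Real.exp_neg,
        Real.exp_log (by positivity)]
      field_simp
      nlinarith
    rw [← h1]
    have := Real.cosh_le_cosh (x := Real.log (Real.sqrt 2 + 1)) (y := c)
    rw [abs_of_pos (Real.log_pos (by nlinarith)), abs_of_pos hc] at this
    exact this.mpr hlen
  have hsinA : Real.sin θA = Real.sin α := by rw [hαdef, Real.sin_pi_sub]
  have hcosA : Real.cos θA = -Real.cos α := by rw [hαdef, Real.cos_pi_sub, neg_neg]
  have hsinApos : 0 < Real.sin θA := Real.sin_pos_of_pos_of_lt_pi hA0 hAπ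
  have hsinBpos : 0 < Real.sin θB := Real.sin_pos_of_pos_of_lt_pi hB0 hBπ
  have hcosC : Real.cos θC < 1 := by
    have := Real.cos_lt_cos_of_nonneg_of_le_pi (le_refl 0) hCπ.le hC0
    simpa using this
  -- key upper bound
  have key : Real.sqrt 2 * (Real.sin α * Real.sin θB) + Real.cos α * Real.cos θB < 1 := by
    have h1 : Real.sin θB * Real.sin θA * Real.sqrt 2 ≤ Real.sin θB * Real.sin θA * Real.cosh c :=
      mul_le_mul_of_nonneg_left hcosh (by positivity)
    rw [hsinA] at h1
    rw [hsinA, hcosA] at dualLaw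
    nlinarith [dualLaw, h1, hcosC]
  -- lower bound via product-to-sum and polynomial estimate
  have e1 : Real.cos (α - θB) = Real.cos α * Real.cos θB + Real.sin α * Real.sin θB :=
    Real.cos_sub α θB
  have e2 : Real.cos (α + θB) = Real.cos α * Real.cos θB - Real.sin α * Real.sin θB :=
    Real.cos_add α θB
  have b1 : Real.cos (α / 2) ≤ Real.cos (α - θB) :=
    Real.cos_le_cos_of_nonneg_of_le_pi (by linarith) (by linarith [Real.pi_pos]) (by linarith)
  have b2 : Real.cos (α + θB) ≤ Real.cos (3 * (α / 2)) :=
    Real.cos_le_cos_of_nonneg_of_le_pi (by linarith) (by linarith) (by linarith)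
  have b3 : Real.sqrt 2 / 2 ≤ Real.cos (α / 2) := by
    have := Real.cos_le_cos_of_nonneg_of_le_pi (x := α / 2) (y := π / 4)
      (by linarith) (by linarith [Real.pi_pos]) (by linarith)
    rwa [Real.cos_pi_div_four] at this
  have b4 : Real.cos (α / 2) ≤ 1 := Real.cos_le_one _
  have three : Real.cos (3 * (α / 2)) = 4 * Real.cos (α / 2) ^ 3 - 3 * Real.cos (α / 2) :=
    Real.cos_three_mul _
  set t := Real.cos (α / 2) with ht
  have factored : (2 * Real.sqrt 2 - 1) * t - 2 * (Real.sqrt 2 - 1) * t ^ 3 - 1 =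
      2 * (Real.sqrt 2 - 1) * ((1 - t) * ((t - Real.sqrt 2 / 2) * (t + 1 + Real.sqrt 2 / 2))) := by
    linear_combination ((1 + Real.sqrt 2 - t - Real.sqrt 2 * t) / 2) * s2
  have prodnn : (0:ℝ) ≤ 2 * (Real.sqrt 2 - 1) * ((1 - t) * ((t - Real.sqrt 2 / 2) * (t + 1 + Real.sqrt 2 / 2))) := by
    apply mul_nonneg (by linarith)
    apply mul_nonneg (by linarith)
    apply mul_nonneg (by linarith) (by linarith)
  have poly : (2:ℝ) ≤ (Real.sqrt 2 + 1) * t - (Real.sqrt 2 - 1) * (4 * t ^ 3 - 3 * t) := by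
    linarith [factored, prodnn]
  -- combine
  have m1 : (Real.sqrt 2 + 1) * t ≤ (Real.sqrt 2 + 1) * Real.cos (α - θB) :=
    mul_le_mul_of_nonneg_left b1 (by linarith)
  have m2 : (Real.sqrt 2 - 1) * Real.cos (α + θB) ≤ (Real.sqrt 2 - 1) * (4 * t ^ 3 - 3 * t) := by
    rw [← three]; exact mul_le_mul_of_nonneg_left b2 (by linarith)
  have e1s : Real.sqrt 2 * Real.cos (α - θB)
      = Real.sqrt 2 * (Real.cos α * Real.cos θB) + Real.sqrt 2 * (Real.sin α * Real.sin θB) := by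
    rw [e1]; ring
  have e2s : Real.sqrt 2 * Real.cos (α + θB)
      = Real.sqrt 2 * (Real.cos α * Real.cos θB) - Real.sqrt 2 * (Real.sin α * Real.sin θB) := by
    rw [e2]; ring
  linarith [key, e1, e2, e1s, e2s, m1, m2, poly]
end

section
/- For τ ∈ (0, π/2) and α ∈ (1/2, 1), the function f(α, τ) = (1 − cos(ατ)cos(τ))/(sin(ατ)sin(τ)) satisfies f(α, τ) < √2. -/
open Real

/-- For `τ ∈ (0, π/2)` and `α ∈ (1/2, 1)`, the function
`f(α, τ) = (1 − cos(ατ)·cos τ)/(sin(ατ)·sin τ)` satisfies `f(α, τ) < √2`. -/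
theorem f_lt_sqrt_two (τ α : ℝ) (hτ : τ ∈ Set.Ioo 0 (π / 2))
    (hα : α ∈ Set.Ioo (1 / 2 : ℝ) 1) :
    (1 - Real.cos (α * τ) * Real.cos τ) / (Real.sin (α * τ) * Real.sin τ) < Real.sqrt 2 := by
  obtain ⟨hτ0, hτ2⟩ := hτ
  obtain ⟨hα0, hα1⟩ := hα
  have hπ := Real.pi_pos
  have ha0 : 0 < α * τ := by nlinarith
  have haτ : α * τ < τ := by nlinarith
  have hsa : 0 < Real.sin (α * τ) := Real.sin_pos_of_pos_of_lt_pi ha0 (by nlinarith)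
  have hsτ : 0 < Real.sin τ := Real.sin_pos_of_pos_of_lt_pi hτ0 (by nlinarith)
  rw [div_lt_iff₀ (by positivity)]
  set c := Real.sqrt 2 with hcdef
  have hc : c ^ 2 = 2 := Real.sq_sqrt (by norm_num)
  have hc1 : 1 < c := by
    nlinarith [Real.sqrt_nonneg 2, Real.sq_sqrt (show (0:ℝ) ≤ 2 by norm_num)]
  -- product-to-sum substitutes
  have e1 : Real.cos (τ - α * τ) = Real.cos τ * Real.cos (α * τ) + Real.sin τ * Real.sin (α * τ) :=
    Real.cos_sub τ (α * τ)
  have e2 : Real.cos (τ + α * τ) = Real.cos τ * Real.cos (α * τ) - Real.sin τ * Real.sin (α * τ) :=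
    Real.cos_add τ (α * τ)
  have hu : Real.cos (τ / 2) < Real.cos (τ - α * τ) :=
    Real.cos_lt_cos_of_nonneg_of_le_pi (by linarith) (by linarith) (by nlinarith)
  have hv : Real.cos (τ + α * τ) < Real.cos (3 * (τ / 2)) :=
    Real.cos_lt_cos_of_nonneg_of_le_pi (by linarith) (by linarith) (by nlinarith)
  -- bounds on w = cos (τ/2)
  set w := Real.cos (τ / 2) with hwdef
  have hw1 : w ≤ 1 := Real.cos_le_one _
  have hw2 : c / 2 < w := by
    have : Real.cos (π / 4) < Real.cos (τ / 2) :=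
      Real.cos_lt_cos_of_nonneg_of_le_pi (by linarith) (by linarith) (by linarith)
    rw [Real.cos_pi_div_four] at this
    rw [hcdef]
    linarith
  have e3 : Real.cos (3 * (τ / 2)) = 4 * w ^ 3 - 3 * w := Real.cos_three_mul (τ / 2)
  -- key inequality: (c+1) w - (c-1) cos(3τ/2) ≥ 2
  have key : (c + 1) * w - (c - 1) * Real.cos (3 * (τ / 2)) ≥ 2 := by
    rw [e3]
    have hprod : (0:ℝ) ≤ (c - 1) * ((1 - w) * ((w - c / 2) * (w + 1 + c / 2))) :=
      mul_nonneg (by linarith) (mul_nonneg (by linarith)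
        (mul_nonneg (by linarith) (by linarith)))
    nlinarith [hprod, hc, sq_nonneg w, sq_nonneg (w - 1), sq_nonneg (w - c/2)]
  have h1 : 0 < (c + 1) * (Real.cos (τ - α * τ) - w) :=
    mul_pos (by linarith) (by linarith)
  have h2 : 0 < (c - 1) * (Real.cos (3 * (τ / 2)) - Real.cos (τ + α * τ)) :=
    mul_pos (by linarith) (by linarith)
  nlinarith [h1, h2, key, e1, e2]
end

section
/- Let X : [0,T] → V be a continuous path into a metric space and suppose h : [0,T] → ℝ is a continuous height function witnessing that X is tree-like, i.e. h ≥ 0, h(0) = h(T) = 0, and d(X_s, X_t) ≤ h(s) + h(t) − 2·inf_{u∈[s,t]} h(u) for all s ≤ t. If h has bounded variation, then X has bounded variation, and the total variation of X is at most the total variation of h. -/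
open Set

/-- Let `X : [0,T] → E` be a path into a metric space with a continuous
height function `h` witnessing that `X` is tree-like: `h ≥ 0` on `[0,T]`, `h 0 = h T = 0`, and
`dist (X s) (X t) ≤ h s + h t − 2·inf_{[s,t]} h` for all `s ≤ t` in `[0,T]`. If `h` has
bounded variation, then `X` has bounded variation and the total variation of `X` on `[0,T]`
is at most that of `h`. -/
theorem treeLike_boundedVariation
    {E : Type*} [MetricSpace E] (T : ℝ) (hT : 0 ≤ T)
    (X : ℝ → E) (h : ℝ → ℝ)
    (hcont : ContinuousOn h (Set.Icc 0 T))
    (hnn : ∀ t ∈ Set.Icc 0 T, 0 ≤ h t)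
    (h0 : h 0 = 0) (hTzero : h T = 0)
    (htree : ∀ s t, s ∈ Set.Icc 0 T → t ∈ Set.Icc 0 T → s ≤ t →
      dist (X s) (X t) ≤ h s + h t - 2 * sInf (h '' Set.Icc s t))
    (hBV : BoundedVariationOn h (Set.Icc 0 T)) :
    BoundedVariationOn X (Set.Icc 0 T) ∧
      eVariationOn X (Set.Icc 0 T) ≤ eVariationOn h (Set.Icc 0 T) := by
  set S := Set.Icc (0:ℝ) T with hS
  -- Key pointwise estimate
  have key : ∀ s t, s ∈ S → t ∈ S → s ≤ t →
      edist (X s) (X t) ≤ eVariationOn h (S ∩ Set.Icc s t) := by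
    intro s t hs ht hst
    have hsub : Set.Icc s t ⊆ S := Set.Icc_subset_Icc hs.1 ht.2
    obtain ⟨u, hu, hmin⟩ := isCompact_Icc.exists_isMinOn (Set.nonempty_Icc.2 hst)
      (hcont.mono hsub)
    have huS : u ∈ S := hsub hu
    have hsInf : sInf (h '' Set.Icc s t) = h u := by
      apply IsLeast.csInf_eq
      exact ⟨⟨u, hu, rfl⟩, by rintro x ⟨y, hy, rfl⟩; exact hmin hy⟩
    have hus : h u ≤ h s := hmin (Set.left_mem_Icc.2 hst)
    have hut : h u ≤ h t := hmin (Set.right_mem_Icc.2 hst)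
    have hdist : dist (X s) (X t) ≤ (h s - h u) + (h t - h u) := by
      have := htree s t hs ht hst
      rw [hsInf] at this
      linarith
    have e1 : edist (X s) (X t) ≤ edist (h s) (h u) + edist (h u) (h t) := by
      rw [edist_dist, edist_dist, edist_dist, Real.dist_eq, Real.dist_eq,
        abs_of_nonneg (by linarith), abs_of_nonpos (by linarith),
        ← ENNReal.ofReal_add (by linarith) (by linarith)]
      exact ENNReal.ofReal_le_ofReal (by linarith)
    refine e1.trans ?_
    rw [← eVariationOn.Icc_add_Icc h hu.1 hu.2 huS]
    gcongr
    · exact eVariationOn.edist_le h ⟨hs, le_rfl, hu.1⟩ ⟨huS, hu.1, le_rfl⟩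
    · exact eVariationOn.edist_le h ⟨huS, le_rfl, hu.2⟩ ⟨ht, hu.2, le_rfl⟩
  have main : eVariationOn X S ≤ eVariationOn h S := by
    apply iSup_le
    rintro ⟨n, u, hmono, hmem⟩
    have step : ∀ m : ℕ, ∑ i ∈ Finset.range m, edist (X (u (i + 1))) (X (u i)) ≤
        eVariationOn h (S ∩ Set.Icc (u 0) (u m)) := by
      intro m
      induction m with
      | zero => simp
      | succ k ih =>
        rw [Finset.sum_range_succ]
        calc ∑ i ∈ Finset.range k, edist (X (u (i + 1))) (X (u i))
              + edist (X (u (k + 1))) (X (u k))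
            ≤ eVariationOn h (S ∩ Set.Icc (u 0) (u k))
              + eVariationOn h (S ∩ Set.Icc (u k) (u (k + 1))) := by
              refine add_le_add ih ?_
              rw [edist_comm]
              exact key _ _ (hmem k) (hmem (k + 1)) (hmono k.le_succ)
          _ = eVariationOn h (S ∩ Set.Icc (u 0) (u (k + 1))) :=
              eVariationOn.Icc_add_Icc h (hmono (Nat.zero_le k)) (hmono k.le_succ) (hmem k)
    exact (step n).trans (eVariationOn.mono h Set.inter_subset_left)
  exact ⟨ne_top_of_le_ne_top hBV main, main⟩
end

section
/- Let (X_n, h_n) be a sequence of tree-like paths on [0,T] with values in a common compact subset of a Banach space E, each h_n a height function for X_n that is 1-Lipschitz. Then there is a subsequence along which (X_n, h_n) converges uniformly to a pair (Y, h) where h is a 1-Lipschitz height function for Y; in particular the limit Y is a Lipschitz tree-like path. -/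
/-!
A `1`-Lipschitz height function makes the path itself `1`-Lipschitz, since for `s ≤ u ≤ t`
we have `h s + h t - 2 h u ≤ (u - s) + (t - u)`. Hence the pairs `(X n, h n)` form an
equicontinuous family with values in the compact set `K × [0, T]`, and Arzelà–Ascoli yields a
uniformly convergent subsequence. Infima over compact intervals are continuous under uniform
convergence, so the tree-like inequality passes to the limit, as do the Lipschitz bound,
nonnegativity and the boundary values.
-/

open Set Filter Topology UniformConvergence

theorem EquicontinuousOn.exists_strictMono_tendstoUniformlyOn {X β : Type*}
    [TopologicalSpace X] [EMetricSpace β] {f : ℕ → X → β} {s : Set X} {K : Set β}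
    (hs : IsCompact s) (hK : IsCompact K) (hf : EquicontinuousOn f s)
    (hfK : ∀ n, ∀ x ∈ s, f n x ∈ K) :
    ∃ φ : ℕ → ℕ, StrictMono φ ∧ ∃ g : X → β, TendstoUniformlyOn (f ∘ φ) g atTop s := by
  -- Uniform convergence on `s` is convergence in `X →ᵤ[{s}] β`, which is pseudo-emetrizable.
  let F : ℕ → X →ᵤ[{s}] β := UniformOnFun.ofFun {s} ∘ f
  have hcl : IsCompact (closure (range F)) :=
    ArzelaAscoli.isCompact_closure_of_isClosedEmbedding (𝔖 := {s})
      (F := UniformOnFun.toFun {s}) (by simpa using hs) IsClosedEmbedding.id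
      (by rintro _ rfl; exact equicontinuousOn_iff_range.mp hf)
      (by simpa [F] using fun x hx => ⟨K, hK, fun n => hfK n x hx⟩)
  obtain ⟨g, -, φ, hφ, hlim⟩ := hcl.tendsto_subseq fun n => subset_closure (mem_range_self n)
  exact ⟨φ, hφ, g, (UniformOnFun.tendsto_iff_tendstoUniformlyOn.mp hlim) s rfl⟩

theorem lipschitzOnWith_of_tendsto {α β ι : Type*} [PseudoEMetricSpace α] [PseudoEMetricSpace β]
    {p : Filter ι} [p.NeBot] {F : ι → α → β} {f : α → β} {K : NNReal} {s : Set α}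
    (hF : ∀ i, LipschitzOnWith K (F i) s)
    (hlim : ∀ x ∈ s, Tendsto (fun i => F i x) p (𝓝 (f x))) :
    LipschitzOnWith K f s := fun x hx y hy =>
  le_of_tendsto ((hlim x hx).edist (hlim y hy)) (Eventually.of_forall fun i => hF i hx hy)

theorem TendstoUniformlyOn.tendsto_sInf_image {ι α : Type*} {p : Filter ι} {F : ι → α → ℝ}
    {f : α → ℝ} {s : Set α} (hF : TendstoUniformlyOn F f p s) (hs : s.Nonempty)
    (hf : BddBelow (f '' s)) :
    Tendsto (fun i => sInf (F i '' s)) p (𝓝 (sInf (f '' s))) := by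
  refine Metric.tendsto_nhds.2 fun ε hε => ?_
  filter_upwards [Metric.tendstoUniformlyOn_iff.1 hF (ε / 2) (half_pos hε)] with i hi
  have hlow : ∀ u ∈ s, sInf (f '' s) - ε / 2 < F i u := fun u hu => by
    have := csInf_le hf (mem_image_of_mem f hu)
    linarith [abs_sub_lt_iff.1 (hi u hu)]
  obtain ⟨_, ⟨u, hu, rfl⟩, hfu⟩ :=
    exists_lt_of_csInf_lt (hs.image f) (lt_add_of_pos_right (sInf (f '' s)) (half_pos hε))
  have hup : sInf (F i '' s) ≤ F i u :=
    csInf_le ⟨_, forall_mem_image.2 fun v hv => (hlow v hv).le⟩ (mem_image_of_mem _ hu)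
  have hge : sInf (f '' s) - ε / 2 ≤ sInf (F i '' s) :=
    le_csInf (hs.image _) (forall_mem_image.2 fun v hv => (hlow v hv).le)
  rw [Real.dist_eq, abs_sub_lt_iff]
  constructor <;> linarith [abs_sub_lt_iff.1 (hi u hu)]

section TreeLike

variable {E : Type*} [SeminormedAddCommGroup E]

def TreeLikeOn (X : ℝ → E) (h : ℝ → ℝ) (a b : ℝ) : Prop :=
  ∀ s t, s ∈ Icc a b → t ∈ Icc a b → s ≤ t →
    ‖X t - X s‖ ≤ h s + h t - 2 * sInf (h '' Icc s t)

theorem LipschitzOnWith.add_sub_two_mul_sInf_le {h : ℝ → ℝ} {a b s t : ℝ}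
    (hh : LipschitzOnWith 1 h (Icc a b)) (hs : s ∈ Icc a b) (ht : t ∈ Icc a b) (hst : s ≤ t) :
    h s + h t - 2 * sInf (h '' Icc s t) ≤ t - s := by
  suffices ∀ u ∈ Icc s t, (h s + h t - (t - s)) / 2 ≤ h u by
    linarith [le_csInf ((nonempty_Icc.2 hst).image h) (forall_mem_image.2 this)]
  intro u hu
  have hu' : u ∈ Icc a b := ⟨hs.1.trans hu.1, hu.2.trans ht.2⟩
  have hsu : h s - h u ≤ u - s := calc
    h s - h u ≤ dist (h s) (h u) := le_abs_self _
    _ ≤ dist s u := by simpa using hh.dist_le_mul s hs u hu'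
    _ = u - s := by rw [Real.dist_eq, abs_sub_comm, abs_of_nonneg (sub_nonneg.2 hu.1)]
  have htu : h t - h u ≤ t - u := calc
    h t - h u ≤ dist (h t) (h u) := le_abs_self _
    _ ≤ dist t u := by simpa using hh.dist_le_mul t ht u hu'
    _ = t - u := by rw [Real.dist_eq, abs_of_nonneg (sub_nonneg.2 hu.2)]
  linarith

theorem TreeLikeOn.lipschitzOnWith {X : ℝ → E} {h : ℝ → ℝ} {a b : ℝ} (hX : TreeLikeOn X h a b)
    (hh : LipschitzOnWith 1 h (Icc a b)) : LipschitzOnWith 1 X (Icc a b) := by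
  have key : ∀ s ∈ Icc a b, ∀ t ∈ Icc a b, s ≤ t → dist (X s) (X t) ≤ dist s t := by
    intro s hs t ht hst
    rw [dist_comm, dist_eq_norm, dist_comm, Real.dist_eq, abs_of_nonneg (sub_nonneg.2 hst)]
    exact (hX s t hs ht hst).trans (hh.add_sub_two_mul_sInf_le hs ht hst)
  refine LipschitzOnWith.of_dist_le_mul fun s hs t ht => ?_
  rw [NNReal.coe_one, one_mul]
  rcases le_total s t with hst | hts
  · exact key s hs t ht hst
  · rw [dist_comm, dist_comm s]; exact key t ht s hs hts

theorem TreeLikeOn.of_tendstoUniformlyOn {ι : Type*} {p : Filter ι} [p.NeBot]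
    {X : ι → ℝ → E} {h : ι → ℝ → ℝ} {Y : ℝ → E} {g : ℝ → ℝ} {a b : ℝ}
    (htree : ∀ i, TreeLikeOn (X i) (h i) a b) (hX : TendstoUniformlyOn X Y p (Icc a b))
    (hh : TendstoUniformlyOn h g p (Icc a b)) (hg : ContinuousOn g (Icc a b)) :
    TreeLikeOn Y g a b := by
  intro s t hs ht hst
  have hsub : Icc s t ⊆ Icc a b := Icc_subset_Icc hs.1 ht.2
  have hinf : Tendsto (fun i => sInf (h i '' Icc s t)) p (𝓝 (sInf (g '' Icc s t))) :=
    (hh.mono hsub).tendsto_sInf_image (nonempty_Icc.2 hst)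
      (isCompact_Icc.image_of_continuousOn (hg.mono hsub)).bddBelow
  refine le_of_tendsto_of_tendsto' (b := p) ?_ ?_ fun i => htree i s t hs ht hst
  · exact ((hX.tendsto_at ht).sub (hX.tendsto_at hs)).norm
  · exact ((hh.tendsto_at hs).add (hh.tendsto_at ht)).sub (hinf.const_mul 2)

end TreeLike

theorem treeLike_compactness_general
    {E : Type*} [NormedAddCommGroup E]
    (T : ℝ) (hT : 0 ≤ T) (K : Set E) (hK : IsCompact K)
    (X : ℕ → ℝ → E) (h : ℕ → ℝ → ℝ)
    (hmem : ∀ n, ∀ t ∈ Set.Icc 0 T, X n t ∈ K)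
    (hlip : ∀ n, LipschitzOnWith 1 (h n) (Set.Icc 0 T))
    (hnn : ∀ n, ∀ t ∈ Set.Icc 0 T, 0 ≤ h n t)
    (h0 : ∀ n, h n 0 = 0) (hTzero : ∀ n, h n T = 0)
    (htree : ∀ n, ∀ s t, s ∈ Set.Icc 0 T → t ∈ Set.Icc 0 T → s ≤ t →
      ‖X n t - X n s‖ ≤ h n s + h n t - 2 * sInf (h n '' Set.Icc s t)) :
    ∃ φ : ℕ → ℕ, StrictMono φ ∧ ∃ (Y : ℝ → E) (g : ℝ → ℝ),
      TendstoUniformlyOn (fun k => X (φ k)) Y atTop (Set.Icc 0 T) ∧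
      TendstoUniformlyOn (fun k => h (φ k)) g atTop (Set.Icc 0 T) ∧
      LipschitzOnWith 1 g (Set.Icc 0 T) ∧
      (∀ t ∈ Set.Icc 0 T, 0 ≤ g t) ∧ g 0 = 0 ∧ g T = 0 ∧
      ∀ s t, s ∈ Set.Icc 0 T → t ∈ Set.Icc 0 T → s ≤ t →
        ‖Y t - Y s‖ ≤ g s + g t - 2 * sInf (g '' Set.Icc s t) := by
  have hpair_lip : ∀ n, LipschitzOnWith 1 (fun t => (X n t, h n t)) (Icc 0 T) := fun n => by
    simpa using (TreeLikeOn.lipschitzOnWith (htree n) (hlip n)).prodMk (hlip n)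
  have hheight_le : ∀ n, ∀ t ∈ Icc 0 T, h n t ≤ t := fun n t ht => by
    simpa [h0, abs_of_nonneg (hnn n t ht), abs_of_nonneg ht.1] using
      (hlip n).dist_le_mul t ht 0 ⟨le_rfl, hT⟩
  have hpair_mem : ∀ n, ∀ t ∈ Icc 0 T, (X n t, h n t) ∈ K ×ˢ Icc 0 T := fun n t ht =>
    ⟨hmem n t ht, hnn n t ht, (hheight_le n t ht).trans ht.2⟩
  obtain ⟨φ, hφ, Z, hZ⟩ :=
    (LipschitzOnWith.uniformEquicontinuousOn _ 1 hpair_lip).equicontinuousOn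
      |>.exists_strictMono_tendstoUniformlyOn isCompact_Icc (hK.prod isCompact_Icc) hpair_mem
  have hXY := uniformContinuous_fst.comp_tendstoUniformlyOn hZ
  have hhg := uniformContinuous_snd.comp_tendstoUniformlyOn hZ
  have hg_lim : ∀ t ∈ Icc 0 T, Tendsto (fun k => h (φ k) t) atTop (𝓝 (Z t).2) :=
    fun t ht => hhg.tendsto_at ht
  have hglip : LipschitzOnWith 1 (fun t => (Z t).2) (Icc 0 T) :=
    lipschitzOnWith_of_tendsto (fun k => hlip (φ k)) hg_lim
  refine ⟨φ, hφ, fun t => (Z t).1, fun t => (Z t).2, hXY, hhg, hglip,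
    fun t ht => ge_of_tendsto' (hg_lim t ht) fun k => hnn (φ k) t ht,
    tendsto_nhds_unique (hg_lim 0 ⟨le_rfl, hT⟩) (by simp [h0]),
    tendsto_nhds_unique (hg_lim T ⟨hT, le_rfl⟩) (by simp [hTzero]),
    TreeLikeOn.of_tendstoUniformlyOn (fun k => htree (φ k)) hXY hhg hglip.continuousOn⟩

/-- Let `(X n, h n)` be a sequence of tree-like paths on `[0,T]` with values
in a common compact subset `K` of a Banach space `E`, each `h n` a `1`-Lipschitz height
function for `X n`. Then there is a subsequence along which `(X n, h n)` converges uniformly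
on `[0,T]` to a pair `(Y, g)` where `g` is a `1`-Lipschitz height function for `Y`; in
particular the limit `Y` is a Lipschitz tree-like path. -/
theorem treeLike_compactness
    {E : Type*} [NormedAddCommGroup E] [NormedSpace ℝ E] [CompleteSpace E]
    (T : ℝ) (hT : 0 ≤ T) (K : Set E) (hK : IsCompact K)
    (X : ℕ → ℝ → E) (h : ℕ → ℝ → ℝ)
    (hmem : ∀ n, ∀ t ∈ Set.Icc 0 T, X n t ∈ K)
    (hlip : ∀ n, LipschitzOnWith 1 (h n) (Set.Icc 0 T))
    (hnn : ∀ n, ∀ t ∈ Set.Icc 0 T, 0 ≤ h n t)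
    (h0 : ∀ n, h n 0 = 0) (hTzero : ∀ n, h n T = 0)
    (htree : ∀ n, ∀ s t, s ∈ Set.Icc 0 T → t ∈ Set.Icc 0 T → s ≤ t →
      ‖X n t - X n s‖ ≤ h n s + h n t - 2 * sInf (h n '' Set.Icc s t)) :
    ∃ φ : ℕ → ℕ, StrictMono φ ∧ ∃ (Y : ℝ → E) (g : ℝ → ℝ),
      TendstoUniformlyOn (fun k => X (φ k)) Y atTop (Set.Icc 0 T) ∧
      TendstoUniformlyOn (fun k => h (φ k)) g atTop (Set.Icc 0 T) ∧
      LipschitzOnWith 1 g (Set.Icc 0 T) ∧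
      (∀ t ∈ Set.Icc 0 T, 0 ≤ g t) ∧ g 0 = 0 ∧ g T = 0 ∧
      ∀ s t, s ∈ Set.Icc 0 T → t ∈ Set.Icc 0 T → s ≤ t →
        ‖Y t - Y s‖ ≤ g s + g t - 2 * sInf (g '' Set.Icc s t) :=
  treeLike_compactness_general T hT K hK X h hmem hlip hnn h0 hTzero htree
end

section
/- For tensors e = e_1 ⊗ … ⊗ e_r and f = f_1 ⊗ … ⊗ f_s in the tensor algebra over V* and a path γ of bounded variation in V over [s,t], the pointwise product of coordinate iterated integrals equals the coordinate iterated integral of the shuffle product: X^e_{s,t} · X^f_{s,t} = X^{e ⧢ f}_{s,t}, where X^{(g_1,…,g_k)}_{s,t} = ∫_{s<u_1<…<u_k<t} dγ^{g_1}_{u_1} … dγ^{g_k}_{u_k} with γ^g_u = ⟨g, γ_u⟩. -/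
open MeasureTheory intervalIntegral

/-- All shuffles (interleavings) of two words, with multiplicity. -/
def shuffles {α : Type*} : List α → List α → List (List α)
  | [], ys => [ys]
  | xs, [] => [xs]
  | x :: xs, y :: ys =>
      ((shuffles xs (y :: ys)).map fun w => x :: w) ++
        ((shuffles (x :: xs) ys).map fun w => y :: w)
  termination_by xs ys => xs.length + ys.length
  decreasing_by all_goals simp [List.length_cons]

open Set in
lemma swap_triangle {φ ψ : ℝ → ℝ} {s b : ℝ}
    (hφ : IntegrableOn φ (Ioc s b)) (hψ : IntegrableOn ψ (Ioc s b)) :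
    ∫ u in Ioc s b, φ u * ∫ v in Ioc u b, ψ v
      = ∫ v in Ioc s b, (∫ u in Ioc s v, φ u) * ψ v := by
  set F : ℝ → ℝ → ℝ := fun u v => ({p : ℝ × ℝ | p.1 < p.2}).indicator (fun p => φ p.1 * ψ p.2) (u, v) with hF
  have hmeaS : MeasurableSet {p : ℝ × ℝ | p.1 < p.2} := measurableSet_lt measurable_fst measurable_snd
  have hint : Integrable (Function.uncurry F)
      ((volume.restrict (Ioc s b)).prod (volume.restrict (Ioc s b))) := by
    have h1 : Integrable (fun p : ℝ × ℝ => φ p.1 * ψ p.2)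
        ((volume.restrict (Ioc s b)).prod (volume.restrict (Ioc s b))) := hφ.mul_prod hψ
    have := h1.indicator hmeaS
    exact this
  have swap := MeasureTheory.integral_integral_swap hint
  have hL : ∫ u in Ioc s b, ∫ v in Ioc s b, F u v
      = ∫ u in Ioc s b, φ u * ∫ v in Ioc u b, ψ v := by
    apply setIntegral_congr_fun measurableSet_Ioc
    intro u hu
    show (∫ v in Set.Ioc s b, F u v) = φ u * ∫ v in Set.Ioc u b, ψ v
    have h1 : (fun v => F u v) = (Ioi u).indicator (fun v => φ u * ψ v) := by
      funext v
      simp [hF, Set.indicator_apply, Set.mem_Ioi, Set.mem_setOf_eq]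
    rw [h1, MeasureTheory.integral_indicator measurableSet_Ioi,
      Measure.restrict_restrict measurableSet_Ioi]
    have h2 : Ioi u ∩ Ioc s b = Ioc u b := by
      ext v
      simp only [mem_inter_iff, mem_Ioi, mem_Ioc]
      exact ⟨fun h => ⟨h.1, h.2.2⟩, fun h => ⟨h.1, lt_trans hu.1 h.1, h.2⟩⟩
    rw [h2, MeasureTheory.integral_const_mul]
  have hR : ∫ v in Ioc s b, ∫ u in Ioc s b, F u v
      = ∫ v in Ioc s b, (∫ u in Ioc s v, φ u) * ψ v := by
    apply setIntegral_congr_fun measurableSet_Ioc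
    intro v hv
    show (∫ u in Set.Ioc s b, F u v) = (∫ u in Set.Ioc s v, φ u) * ψ v
    have h1 : (fun u => F u v) = (Iio v).indicator (fun u => φ u * ψ v) := by
      funext u
      simp [hF, Set.indicator_apply, Set.mem_Iio, Set.mem_setOf_eq]
    rw [h1, MeasureTheory.integral_indicator measurableSet_Iio,
      Measure.restrict_restrict measurableSet_Iio]
    have h2 : Iio v ∩ Ioc s b = Ioo s v := by
      ext u
      simp only [mem_inter_iff, mem_Iio, mem_Ioo, mem_Ioc]
      exact ⟨fun h => ⟨h.2.1, h.1⟩, fun h => ⟨h.2, h.1, le_trans (le_of_lt h.2) hv.2⟩⟩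
    rw [h2, MeasureTheory.integral_mul_const, ← integral_Ioc_eq_integral_Ioo]
  rw [← hL, ← hR]
  exact swap

open Set in
lemma prod_integral_eq {φ ψ : ℝ → ℝ} {s b : ℝ} (hsb : s ≤ b)
    (hφ : ∀ x y, IntervalIntegrable φ volume x y)
    (hψ : ∀ x y, IntervalIntegrable ψ volume x y) :
    (∫ u in s..b, φ u) * (∫ u in s..b, ψ u)
      = ∫ u in s..b, (φ u * (∫ v in u..b, ψ v) + ψ u * (∫ v in u..b, φ v)) := by
  have hΦc : Continuous fun u => ∫ v in u..b, φ v := by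
    have h := (intervalIntegral.continuous_primitive hφ b).neg
    have : (fun u => ∫ v in u..b, φ v) = fun u => -(∫ v in b..u, φ v) := by
      funext u; rw [intervalIntegral.integral_symm]
    rw [this]; exact h
  have hΨc : Continuous fun u => ∫ v in u..b, ψ v := by
    have h := (intervalIntegral.continuous_primitive hψ b).neg
    have : (fun u => ∫ v in u..b, ψ v) = fun u => -(∫ v in b..u, ψ v) := by
      funext u; rw [intervalIntegral.integral_symm]
    rw [this]; exact h
  have hFc : Continuous fun u => ∫ v in s..u, φ v := intervalIntegral.continuous_primitive hφ s
  have hφΨ : IntervalIntegrable (fun u => φ u * ∫ v in u..b, ψ v) volume s b :=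
    (hφ s b).mul_continuousOn hΨc.continuousOn
  have hψΦ : IntervalIntegrable (fun u => ψ u * ∫ v in u..b, φ v) volume s b :=
    (hψ s b).mul_continuousOn hΦc.continuousOn
  rw [show (∫ u in s..b, (φ u * (∫ v in u..b, ψ v) + ψ u * (∫ v in u..b, φ v)))
      = (∫ u in s..b, φ u * ∫ v in u..b, ψ v) + ∫ u in s..b, ψ u * ∫ v in u..b, φ v
    from intervalIntegral.integral_add hφΨ hψΦ]
  have h1 : ∫ u in s..b, φ u * ∫ v in u..b, ψ v
      = ∫ v in Ioc s b, (∫ u in Ioc s v, φ u) * ψ v := by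
    rw [intervalIntegral.integral_of_le hsb]
    rw [setIntegral_congr_fun measurableSet_Ioc
      (g := fun u => φ u * ∫ v in Ioc u b, ψ v)
      (fun u hu => by rw [intervalIntegral.integral_of_le hu.2])]
    exact swap_triangle (hφ s b).1 (hψ s b).1
  have h2 : ∫ u in s..b, ψ u * ∫ v in u..b, φ v
      = (∫ u in s..b, φ u) * (∫ u in s..b, ψ u)
        - ∫ v in Ioc s b, (∫ u in Ioc s v, φ u) * ψ v := by
    have key : ∀ u ∈ Set.uIcc s b, ψ u * (∫ v in u..b, φ v)
        = ψ u * (∫ v in s..b, φ v) - (∫ v in s..u, φ v) * ψ u := by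
      intro u _
      rw [← intervalIntegral.integral_add_adjacent_intervals (hφ s u) (hφ u b)]; ring
    rw [intervalIntegral.integral_congr key]
    have hi1 : IntervalIntegrable (fun u => ψ u * (∫ v in s..b, φ v)) volume s b :=
      (hψ s b).mul_const _
    have hi2 : IntervalIntegrable (fun u => (∫ v in s..u, φ v) * ψ u) volume s b :=
      (hψ s b).continuousOn_mul hFc.continuousOn
    rw [intervalIntegral.integral_sub hi1 hi2, intervalIntegral.integral_mul_const]
    have h3 : ∫ u in s..b, (∫ v in s..u, φ v) * ψ u
        = ∫ v in Ioc s b, (∫ u in Ioc s v, φ u) * ψ v := by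
      rw [intervalIntegral.integral_of_le hsb]
      exact setIntegral_congr_fun measurableSet_Ioc
        (fun u hu => by rw [intervalIntegral.integral_of_le (le_of_lt hu.1)])
    rw [h3]; ring
  rw [h1, h2]; ring

/-- The coordinate iterated integral `X^w_{s,t} = ∫_{s<u_1<…<u_k<t} dγ^{g_1}…dγ^{g_k}`
of a path with derivative density `γ'`, for the word `w = (g_1, …, g_k)` of linear
functionals. -/
noncomputable def coordIter {V : Type*} [NormedAddCommGroup V] [NormedSpace ℝ V]
    (γ' : ℝ → V) : List (V →L[ℝ] ℝ) → ℝ → ℝ → ℝ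
  | [], _, _ => 1
  | g :: w, s, t => ∫ u in s..t, g (γ' u) * coordIter γ' w u t

section Main

variable {V : Type*} [NormedAddCommGroup V] [NormedSpace ℝ V]
  (γ' : ℝ → V) (b : ℝ)
  (hmeas : AEStronglyMeasurable γ' volume)
  (C : ℝ) (hbd : ∀ u, ‖γ' u‖ ≤ C)

include hmeas hbd

lemma comp_intervalIntegrable (g : V →L[ℝ] ℝ) (x y : ℝ) :
    IntervalIntegrable (fun u => g (γ' u)) volume x y := by
  have hm : AEStronglyMeasurable (fun u => g (γ' u)) volume :=
    g.continuous.comp_aestronglyMeasurable hmeas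
  refine IntervalIntegrable.mono_fun' (g := fun _ => ‖g‖ * C)
    intervalIntegrable_const hm.restrict ?_
  filter_upwards with u
  calc ‖g (γ' u)‖ ≤ ‖g‖ * ‖γ' u‖ := g.le_opNorm _
    _ ≤ ‖g‖ * C := by
      exact mul_le_mul_of_nonneg_left (hbd u) (norm_nonneg _)

lemma cont_coordIter (w : List (V →L[ℝ] ℝ)) :
    Continuous fun u => coordIter γ' w u b := by
  induction w with
  | nil =>
    have : (fun u => coordIter γ' ([] : List (V →L[ℝ] ℝ)) u b) = fun _ => (1 : ℝ) := rfl
    rw [this]; exact continuous_const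
  | cons g w ih =>
    have hii : ∀ x y, IntervalIntegrable (fun u => g (γ' u) * coordIter γ' w u b) volume x y :=
      fun x y => (comp_intervalIntegrable γ' hmeas C hbd g x y).mul_continuousOn ih.continuousOn
    have h := (intervalIntegral.continuous_primitive hii b).neg
    have heq : (fun s => coordIter γ' (g :: w) s b)
        = fun s => -(∫ u in b..s, g (γ' u) * coordIter γ' w u b) := by
      funext s
      show (∫ u in s..b, g (γ' u) * coordIter γ' w u b) = _
      rw [intervalIntegral.integral_symm]
    rw [heq]; exact h

lemma integrand_intervalIntegrable (g : V →L[ℝ] ℝ) (w : List (V →L[ℝ] ℝ)) (x y : ℝ) :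
    IntervalIntegrable (fun u => g (γ' u) * coordIter γ' w u b) volume x y :=
  (comp_intervalIntegrable γ' hmeas C hbd g x y).mul_continuousOn
    (cont_coordIter γ' b hmeas C hbd w).continuousOn

lemma cont_sum (L : List (List (V →L[ℝ] ℝ))) :
    Continuous fun u => (L.map fun w => coordIter γ' w u b).sum := by
  induction L with
  | nil => simpa using continuous_const
  | cons w L ih =>
    simp only [List.map_cons, List.sum_cons]
    exact (cont_coordIter γ' b hmeas C hbd w).add ih

lemma sum_integral (g : V →L[ℝ] ℝ) (L : List (List (V →L[ℝ] ℝ))) (s : ℝ) :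
    ∫ u in s..b, g (γ' u) * (L.map fun w => coordIter γ' w u b).sum
      = (L.map fun w => ∫ u in s..b, g (γ' u) * coordIter γ' w u b).sum := by
  induction L with
  | nil => simp
  | cons w L ih =>
    simp only [List.map_cons, List.sum_cons]
    rw [← ih]
    rw [show (∫ u in s..b, g (γ' u) * ((coordIter γ' w u b) + (L.map fun w => coordIter γ' w u b).sum))
        = (∫ u in s..b, g (γ' u) * coordIter γ' w u b)
          + ∫ u in s..b, g (γ' u) * (L.map fun w => coordIter γ' w u b).sum from by
      rw [← intervalIntegral.integral_add (integrand_intervalIntegrable γ' b hmeas C hbd g w s b)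
        ((comp_intervalIntegrable γ' hmeas C hbd g s b).mul_continuousOn
          (cont_sum γ' b hmeas C hbd L).continuousOn)]
      congr 1; funext u; ring]

theorem coordIter_mul_eq_shuffle'
    (e f : List (V →L[ℝ] ℝ)) : ∀ s : ℝ, s ≤ b →
    coordIter γ' e s b * coordIter γ' f s b =
      ((shuffles e f).map fun w => coordIter γ' w s b).sum := by
  induction e, f using shuffles.induct with
  | case1 f =>
    intro s hs
    simp [shuffles, coordIter, one_mul]
  | case2 e h =>
    intro s hs
    rw [show shuffles e [] = [e] from by cases e <;> simp [shuffles]]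
    simp [coordIter, mul_one]
  | case3 g e' h f' ih1 ih2 =>
    intro s hs
    have hφ := integrand_intervalIntegrable γ' b hmeas C hbd g e'
    have hψ := integrand_intervalIntegrable γ' b hmeas C hbd h f'
    have lhs1 : coordIter γ' (g :: e') s b * coordIter γ' (h :: f') s b
        = ∫ u in s..b, ((fun u => g (γ' u) * coordIter γ' e' u b) u * (∫ v in u..b, h (γ' v) * coordIter γ' f' v b)
            + (fun u => h (γ' u) * coordIter γ' f' u b) u * (∫ v in u..b, g (γ' v) * coordIter γ' e' v b)) :=
      prod_integral_eq hs hφ hψ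
    rw [lhs1]
    have congr1 : ∀ u ∈ Set.uIcc s b,
        ((g (γ' u) * coordIter γ' e' u b) * (∫ v in u..b, h (γ' v) * coordIter γ' f' v b)
          + (h (γ' u) * coordIter γ' f' u b) * (∫ v in u..b, g (γ' v) * coordIter γ' e' v b))
        = g (γ' u) * ((shuffles e' (h :: f')).map fun w => coordIter γ' w u b).sum
          + h (γ' u) * ((shuffles (g :: e') f').map fun w => coordIter γ' w u b).sum := by
      intro u hu
      rw [Set.uIcc_of_le hs] at hu
      have hub : u ≤ b := hu.2
      have e1 : (∫ v in u..b, h (γ' v) * coordIter γ' f' v b) = coordIter γ' (h :: f') u b := rfl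
      have e2 : (∫ v in u..b, g (γ' v) * coordIter γ' e' v b) = coordIter γ' (g :: e') u b := rfl
      rw [e1, e2, ← ih1 u hub, ← ih2 u hub]
      ring
    rw [intervalIntegral.integral_congr congr1]
    rw [show (∫ u in s..b, (g (γ' u) * ((shuffles e' (h :: f')).map fun w => coordIter γ' w u b).sum
          + h (γ' u) * ((shuffles (g :: e') f').map fun w => coordIter γ' w u b).sum))
        = (∫ u in s..b, g (γ' u) * ((shuffles e' (h :: f')).map fun w => coordIter γ' w u b).sum)
          + ∫ u in s..b, h (γ' u) * ((shuffles (g :: e') f').map fun w => coordIter γ' w u b).sum from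
      intervalIntegral.integral_add
        ((comp_intervalIntegrable γ' hmeas C hbd g s b).mul_continuousOn
          (cont_sum γ' b hmeas C hbd _).continuousOn)
        ((comp_intervalIntegrable γ' hmeas C hbd h s b).mul_continuousOn
          (cont_sum γ' b hmeas C hbd _).continuousOn)]
    rw [sum_integral γ' b hmeas C hbd, sum_integral γ' b hmeas C hbd]
    rw [show shuffles (g :: e') (h :: f')
        = ((shuffles e' (h :: f')).map fun w => g :: w)
          ++ ((shuffles (g :: e') f').map fun w => h :: w) from by rw [shuffles]]
    rw [List.map_append, List.sum_append, List.map_map, List.map_map]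
    rfl

end Main

/-- For words `e, f` of linear functionals on `V` and a bounded-variation
path `γ` in `V` (given by a bounded measurable derivative density `γ'` on `[a,b]`), the
pointwise product of coordinate iterated integrals is the coordinate iterated integral of the
shuffle product: `X^e_{a,b} · X^f_{a,b} = X^{e ⧢ f}_{a,b}`. -/
theorem coordIter_mul_eq_shuffle
    {V : Type*} [NormedAddCommGroup V] [NormedSpace ℝ V]
    (γ' : ℝ → V) (a b : ℝ) (hab : a ≤ b)
    (hmeas : AEStronglyMeasurable γ' volume)
    (C : ℝ) (hbd : ∀ u, ‖γ' u‖ ≤ C)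
    (e f : List (V →L[ℝ] ℝ)) :
    coordIter γ' e a b * coordIter γ' f a b =
      ((shuffles e f).map fun w => coordIter γ' w a b).sum :=
  coordIter_mul_eq_shuffle' γ' b hmeas C hbd e f a hab
end

section
/- Let e = e_1 ⊗ … ⊗ e_r and f = f_1 ⊗ … ⊗ f_s be in T(V*) with s ≥ 1, and γ a bounded variation path. Then ∫∫_{s<u_1<u_2<t} dX^{e}_{s,u_1} dX^{f}_{s,u_2} = X^{(e ⧢ f̃) ⊗ f_s}_{s,t}, where f̃ = f_1 ⊗ … ⊗ f_{s−1}. In particular, any iterated integral of coordinate iterated integrals of γ is itself a coordinate iterated integral of γ. -/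
open MeasureTheory intervalIntegral

/-! The shuffle identity `X^e_{s,t} X^f_{s,t} = ∑_{w ∈ e ⧢ f} X^w_{s,t}` is proved by induction on
`|e| + |f|`: the product of `X^{x::e}` and `X^{y::f}` is an integral over the square `[s,t]²`,
and splitting it along the diagonal (Fubini) gives two triangles which reproduce the two
branches of the recursion defining `shuffles`. Fubini on a triangle also shows that appending a
letter `g` is one more outer integration, `X^{w g}_{s,t} = ∫_s^t X^w_{s,u} g(γ'_u) du`. The theorem
follows by multiplying the shuffle identity at `(a, u)` by `g(γ'_u)` and integrating in `u`.
As `X^w` only depends on the a.e. class of `γ'`, one may take `γ'` strongly measurable, which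
makes `(s, t) ↦ X^w_{s,t}` jointly measurable. -/

open Set

section Analysis

variable {E : Type*} [NormedAddCommGroup E]

theorem MeasureTheory.AEStronglyMeasurable.exists_stronglyMeasurable_forall_norm_le
    {α : Type*} [MeasurableSpace α] {μ : Measure α} {f : α → E} (hf : AEStronglyMeasurable f μ)
    {C : ℝ} (hC : ∀ x, ‖f x‖ ≤ C) : ∃ g, StronglyMeasurable g ∧ (∀ x, ‖g x‖ ≤ C) ∧ f =ᵐ[μ] g := by
  refine ⟨fun x => if ‖hf.mk f x‖ ≤ C then hf.mk f x else 0, ?_, fun x => ?_, ?_⟩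
  · exact .ite (measurableSet_le hf.stronglyMeasurable_mk.norm.measurable measurable_const)
      hf.stronglyMeasurable_mk stronglyMeasurable_const
  · dsimp only
    split_ifs with h
    · exact h
    · simpa using (norm_nonneg _).trans (hC x)
  · filter_upwards [hf.ae_eq_mk] with x hx
    rw [if_pos (hx ▸ hC x), hx]

theorem intervalIntegrable_of_norm_le {μ : Measure ℝ} [IsLocallyFiniteMeasure μ] {f : ℝ → E}
    {a b M : ℝ} (hf : AEStronglyMeasurable f μ) (hM : ∀ u ∈ uIcc a b, ‖f u‖ ≤ M) :
    IntervalIntegrable f μ a b := by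
  rw [intervalIntegrable_iff]
  refine IntegrableOn.of_bound measure_Ioc_lt_top hf.restrict M ?_
  exact ae_restrict_of_forall_mem measurableSet_uIoc fun u hu => hM u (uIoc_subset_uIcc hu)

theorem IntervalIntegrable.list_sum_map {μ : Measure ℝ} {ι : Type*} {L : List ι}
    {f : ι → ℝ → E} {a b : ℝ} (hf : ∀ i ∈ L, IntervalIntegrable (f i) μ a b) :
    IntervalIntegrable (fun u => (L.map fun i => f i u).sum) μ a b := by
  induction L with
  | nil => exact .zero
  | cons i L ih =>
    simpa using (hf i List.mem_cons_self).add (ih fun j hj => hf j (List.mem_cons_of_mem i hj))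

variable [NormedSpace ℝ E]

theorem intervalIntegral.integral_list_sum_map {μ : Measure ℝ} {ι : Type*} (L : List ι)
    (f : ι → ℝ → E) {a b : ℝ} (hf : ∀ i ∈ L, IntervalIntegrable (f i) μ a b) :
    ∫ u in a..b, (L.map fun i => f i u).sum ∂μ = (L.map fun i => ∫ u in a..b, f i u ∂μ).sum := by
  induction L with
  | nil => simp
  | cons i L ih =>
    have hL : ∀ j ∈ L, IntervalIntegrable (f j) μ a b := fun j hj =>
      hf j (List.mem_cons_of_mem i hj)
    simp only [List.map_cons, List.sum_cons]
    rw [integral_add (hf i List.mem_cons_self) (.list_sum_map hL), ih hL]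

theorem MeasureTheory.StronglyMeasurable.intervalIntegral {α : Type*} [MeasurableSpace α]
    {μ : Measure ℝ} [SFinite μ] {f : α → ℝ → E} (hf : StronglyMeasurable (Function.uncurry f))
    {a b : α → ℝ} (ha : Measurable a) (hb : Measurable b) :
    StronglyMeasurable fun x => ∫ u in a x..b x, f x u ∂μ := by
  have hIoc : ∀ {c d : α → ℝ}, Measurable c → Measurable d →
      StronglyMeasurable fun x => ∫ u in Ioc (c x) (d x), f x u ∂μ := by
    intro c d hc hd
    have hset : MeasurableSet {p : α × ℝ | c p.1 < p.2 ∧ p.2 ≤ d p.1} :=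
      (_root_.measurableSet_lt (hc.comp measurable_fst) measurable_snd).inter
        (_root_.measurableSet_le measurable_snd (hd.comp measurable_fst))
    simp_rw [← MeasureTheory.integral_indicator measurableSet_Ioc]
    exact (hf.indicator hset).integral_prod_right'
  exact (hIoc ha hb).sub (hIoc hb ha)

theorem integral_integral_swap_triangle [CompleteSpace E] {μ : Measure ℝ} [SFinite μ]
    [NullSingletonClass μ] {H : ℝ → ℝ → E} {s t : ℝ} (hst : s ≤ t)
    (hH : Integrable (Function.uncurry H) ((μ.restrict (Ioc s t)).prod (μ.restrict (Ioc s t)))) :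
    ∫ u in s..t, ∫ v in u..t, H u v ∂μ ∂μ = ∫ v in s..t, ∫ u in s..v, H u v ∂μ ∂μ := by
  have hlt : MeasurableSet {p : ℝ × ℝ | p.1 < p.2} := measurableSet_lt measurable_fst measurable_snd
  have swap := integral_integral_swap
    (f := fun u v => {p : ℝ × ℝ | p.1 < p.2}.indicator (Function.uncurry H) (u, v))
    (hH.indicator hlt)
  simp only [intervalIntegral.integral_of_le hst]
  convert swap using 1
  · refine setIntegral_congr_fun measurableSet_Ioc fun u hu => ?_
    change _ = ∫ v in Ioc s t, (Ioi u).indicator (H u) v ∂μ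
    rw [setIntegral_indicator measurableSet_Ioi, Ioc_inter_Ioi, max_eq_right hu.1.le,
      intervalIntegral.integral_of_le hu.2]
  · refine setIntegral_congr_fun measurableSet_Ioc fun v hv => ?_
    change _ = ∫ u in Ioc s t, (Iio v).indicator (fun u => H u v) u ∂μ
    have : Ioc s t ∩ Iio v = Ioo s v := by
      ext u; simp only [mem_inter_iff, mem_Ioc, mem_Iio, mem_Ioo]
      exact ⟨fun ⟨⟨h₁, _⟩, h₂⟩ => ⟨h₁, h₂⟩, fun ⟨h₁, h₂⟩ => ⟨⟨h₁, h₂.le.trans hv.2⟩, h₂⟩⟩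
    rw [setIntegral_indicator measurableSet_Iio, this, ← integral_Ioc_eq_integral_Ioo,
      intervalIntegral.integral_of_le hv.1.le]

theorem integral_mul_integral_eq_add {μ : Measure ℝ} [SFinite μ] [NullSingletonClass μ]
    {F G : ℝ → ℝ} {s t : ℝ} (hst : s ≤ t) (hF : IntervalIntegrable F μ s t)
    (hG : IntervalIntegrable G μ s t) :
    (∫ u in s..t, F u ∂μ) * ∫ v in s..t, G v ∂μ =
      (∫ u in s..t, F u * ∫ v in u..t, G v ∂μ ∂μ) +
        ∫ v in s..t, (∫ u in v..t, F u ∂μ) * G v ∂μ := by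
  have hFG := integral_integral_swap_triangle (H := fun u v => F u * G v) hst
    (((intervalIntegrable_iff_integrableOn_Ioc_of_le hst).1 hF).mul_prod
      ((intervalIntegrable_iff_integrableOn_Ioc_of_le hst).1 hG))
  simp only [intervalIntegral.integral_const_mul, intervalIntegral.integral_mul_const] at hFG
  have hsplit : ∫ v in s..t, (∫ u in s..v, F u ∂μ) * G v ∂μ =
      ∫ v in s..t, ((∫ u in s..t, F u ∂μ) * G v - (∫ u in v..t, F u ∂μ) * G v) ∂μ := by
    refine intervalIntegral.integral_congr fun v hv => ?_
    rw [← sub_mul, ← intervalIntegral.integral_interval_sub_left hF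
      (hF.mono_set (uIcc_subset_uIcc left_mem_uIcc hv)), sub_sub_cancel]
  have hcont : ContinuousOn (fun v => ∫ u in v..t, F u ∂μ) (uIcc s t) :=
    intervalIntegral.continuousOn_primitive_interval_left
      (((intervalIntegrable_iff_integrableOn_Icc_of_le hst).1 hF).mono_set
        (uIcc_of_le hst).subset)
  rw [hFG, hsplit, intervalIntegral.integral_sub (hG.const_mul _) (hG.continuousOn_mul hcont),
    intervalIntegral.integral_const_mul]
  ring

end Analysis

section CoordIter

variable {V : Type*} [NormedAddCommGroup V] [NormedSpace ℝ V] {γ' : ℝ → V}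

theorem coordIter_congr_ae {γ₁ : ℝ → V} (h : γ' =ᵐ[volume] γ₁) (w : List (V →L[ℝ] ℝ))
    (s t : ℝ) : coordIter γ' w s t = coordIter γ₁ w s t := by
  induction w generalizing s with
  | nil => rfl
  | cons g w ih =>
    refine intervalIntegral.integral_congr_ae ?_
    filter_upwards [h] with u hu _
    rw [hu, ih]

theorem stronglyMeasurable_coordIter (hγ : StronglyMeasurable γ') (w : List (V →L[ℝ] ℝ)) :
    StronglyMeasurable (Function.uncurry (coordIter γ' w)) := by
  induction w with
  | nil => exact stronglyMeasurable_const
  | cons g w ih =>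
    exact StronglyMeasurable.intervalIntegral (μ := volume)
      (f := fun p u => g (γ' u) * coordIter γ' w u p.2)
      (((g.continuous.comp_stronglyMeasurable hγ).comp_measurable measurable_snd).mul
        (ih.comp_measurable (measurable_snd.prodMk measurable_fst.snd)))
      measurable_fst measurable_snd

variable {C : ℝ}

theorem exists_norm_coordIter_le (hbd : ∀ u, ‖γ' u‖ ≤ C) (w : List (V →L[ℝ] ℝ)) (p q : ℝ) :
    ∃ K, 0 ≤ K ∧ ∀ s ∈ uIcc p q, ∀ t ∈ uIcc p q, ‖coordIter γ' w s t‖ ≤ K := by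
  induction w with
  | nil => exact ⟨1, zero_le_one, fun s _ t _ => by simp [coordIter]⟩
  | cons g w ih =>
    obtain ⟨K, hK, hbound⟩ := ih
    have hgC : 0 ≤ ‖g‖ * C := (norm_nonneg _).trans (g.le_opNorm_of_le (hbd 0))
    refine ⟨‖g‖ * C * K * |q - p|, by positivity, fun s hs t ht => ?_⟩
    have hsub : uIcc s t ⊆ uIcc p q := uIcc_subset_uIcc hs ht
    calc ‖coordIter γ' (g :: w) s t‖ ≤ ‖g‖ * C * K * |t - s| :=
          intervalIntegral.norm_integral_le_of_norm_le_const fun u hu => by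
            rw [norm_mul]
            exact mul_le_mul (g.le_opNorm_of_le (hbd u))
              (hbound u (hsub (uIoc_subset_uIcc hu)) t ht) (norm_nonneg _) hgC
      _ ≤ ‖g‖ * C * K * |q - p| :=
          mul_le_mul_of_nonneg_left (abs_sub_le_of_uIcc_subset_uIcc hsub) (by positivity)

theorem intervalIntegrable_apply_mul_coordIter (hγ : StronglyMeasurable γ')
    (hbd : ∀ u, ‖γ' u‖ ≤ C) (g : V →L[ℝ] ℝ) (w : List (V →L[ℝ] ℝ)) (s t : ℝ) :
    IntervalIntegrable (fun u => g (γ' u) * coordIter γ' w u t) volume s t := by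
  obtain ⟨K, -, hK⟩ := exists_norm_coordIter_le hbd w s t
  refine intervalIntegrable_of_norm_le (M := ‖g‖ * C * K) ?_ fun u hu => ?_
  · exact ((g.continuous.comp_stronglyMeasurable hγ).mul ((stronglyMeasurable_coordIter hγ w)
      |>.comp_measurable (measurable_id.prodMk measurable_const))).aestronglyMeasurable
  · rw [norm_mul]
    exact mul_le_mul (g.le_opNorm_of_le (hbd u)) (hK u hu t right_mem_uIcc) (norm_nonneg _)
      ((norm_nonneg _).trans (g.le_opNorm_of_le (hbd u)))

theorem intervalIntegrable_coordIter_mul_apply (hγ : StronglyMeasurable γ')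
    (hbd : ∀ u, ‖γ' u‖ ≤ C) (w : List (V →L[ℝ] ℝ)) (g : V →L[ℝ] ℝ) (s t : ℝ) :
    IntervalIntegrable (fun u => coordIter γ' w s u * g (γ' u)) volume s t := by
  obtain ⟨K, hK₀, hK⟩ := exists_norm_coordIter_le hbd w s t
  refine intervalIntegrable_of_norm_le (M := K * (‖g‖ * C)) ?_ fun u hu => ?_
  · exact (((stronglyMeasurable_coordIter hγ w).comp_measurable
      (measurable_const.prodMk measurable_id)).mul
        (g.continuous.comp_stronglyMeasurable hγ)).aestronglyMeasurable
  · rw [norm_mul]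
    exact mul_le_mul (hK s left_mem_uIcc u hu) (g.le_opNorm_of_le (hbd u)) (norm_nonneg _) hK₀

theorem integral_apply_mul_sum_coordIter (hγ : StronglyMeasurable γ')
    (hbd : ∀ u, ‖γ' u‖ ≤ C) (g : V →L[ℝ] ℝ) (L : List (List (V →L[ℝ] ℝ))) (s t : ℝ) :
    ∫ u in s..t, g (γ' u) * (L.map fun w => coordIter γ' w u t).sum =
      (L.map fun w => coordIter γ' (g :: w) s t).sum := by
  simp_rw [← List.sum_map_mul_left]
  exact intervalIntegral.integral_list_sum_map L _ fun w _ =>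
    intervalIntegrable_apply_mul_coordIter hγ hbd g w s t

theorem coordIter_append_singleton (hγ : StronglyMeasurable γ')
    (hbd : ∀ u, ‖γ' u‖ ≤ C) (w : List (V →L[ℝ] ℝ)) (g : V →L[ℝ] ℝ) {s t : ℝ} (hst : s ≤ t) :
    coordIter γ' (w ++ [g]) s t = ∫ u in s..t, coordIter γ' w s u * g (γ' u) := by
  induction w generalizing s with
  | nil => simp [coordIter]
  | cons x w ih =>
    obtain ⟨K, hK₀, hK⟩ := exists_norm_coordIter_le hbd w s t
    have hxC : 0 ≤ ‖x‖ * C := (norm_nonneg _).trans (x.le_opNorm_of_le (hbd 0))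
    have hgC : 0 ≤ ‖g‖ * C := (norm_nonneg _).trans (g.le_opNorm_of_le (hbd 0))
    have hH : Integrable (fun p : ℝ × ℝ => x (γ' p.1) * (coordIter γ' w p.1 p.2 * g (γ' p.2)))
        ((volume.restrict (Ioc s t)).prod (volume.restrict (Ioc s t))) := by
      refine Integrable.of_bound (C := ‖x‖ * C * (K * (‖g‖ * C))) ?_ ?_
      · exact (((x.continuous.comp_stronglyMeasurable hγ).comp_measurable measurable_fst).mul
          ((stronglyMeasurable_coordIter hγ w).mul ((g.continuous.comp_stronglyMeasurable hγ)
            |>.comp_measurable measurable_snd))).aestronglyMeasurable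
      rw [Measure.prod_restrict]
      refine ae_restrict_of_forall_mem (measurableSet_Ioc.prod measurableSet_Ioc) ?_
      rintro ⟨u, v⟩ ⟨hu, hv⟩
      have hmem : ∀ {r}, r ∈ Ioc s t → r ∈ uIcc s t := fun hr =>
        Icc_subset_uIcc (Ioc_subset_Icc_self hr)
      rw [norm_mul, norm_mul]
      exact mul_le_mul (x.le_opNorm_of_le (hbd u)) (mul_le_mul (hK u (hmem hu) v (hmem hv))
        (g.le_opNorm_of_le (hbd v)) (norm_nonneg _) hK₀) (by positivity) hxC
    rw [List.cons_append]
    calc coordIter γ' (x :: (w ++ [g])) s t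
        = ∫ u in s..t, ∫ v in u..t, x (γ' u) * (coordIter γ' w u v * g (γ' v)) := by
          refine intervalIntegral.integral_congr fun u hu => ?_
          rw [uIcc_of_le hst] at hu
          rw [ih hu.2, intervalIntegral.integral_const_mul]
      _ = ∫ v in s..t, ∫ u in s..v, x (γ' u) * (coordIter γ' w u v * g (γ' v)) :=
          integral_integral_swap_triangle hst hH
      _ = ∫ v in s..t, coordIter γ' (x :: w) s v * g (γ' v) := by
          refine intervalIntegral.integral_congr fun v _ => ?_
          simp only [← mul_assoc, intervalIntegral.integral_mul_const]
          rfl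

theorem coordIter_mul_coordIter (hγ : StronglyMeasurable γ') (hbd : ∀ u, ‖γ' u‖ ≤ C) :
    ∀ (e f : List (V →L[ℝ] ℝ)) {s t : ℝ}, s ≤ t →
      coordIter γ' e s t * coordIter γ' f s t =
        ((shuffles e f).map fun w => coordIter γ' w s t).sum
  | [], f, s, t, _ => by simp [shuffles, coordIter]
  | x :: e, [], s, t, _ => by simp [shuffles, coordIter]
  | x :: e, y :: f, s, t, hst => by
    have hle : ∀ u ∈ uIcc s t, u ≤ t := fun u hu => (uIcc_of_le hst ▸ hu).2
    calc coordIter γ' (x :: e) s t * coordIter γ' (y :: f) s t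
        = (∫ u in s..t, x (γ' u) * coordIter γ' e u t * coordIter γ' (y :: f) u t) +
            ∫ v in s..t, coordIter γ' (x :: e) v t * (y (γ' v) * coordIter γ' f v t) :=
          integral_mul_integral_eq_add hst (intervalIntegrable_apply_mul_coordIter hγ hbd x e s t)
            (intervalIntegrable_apply_mul_coordIter hγ hbd y f s t)
      _ = (∫ u in s..t,
              x (γ' u) * ((shuffles e (y :: f)).map fun w => coordIter γ' w u t).sum) +
            ∫ v in s..t,
              y (γ' v) * ((shuffles (x :: e) f).map fun w => coordIter γ' w v t).sum := by
          congr 1 <;> refine intervalIntegral.integral_congr fun u hu => ?_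
          · rw [mul_assoc, coordIter_mul_coordIter hγ hbd e (y :: f) (hle u hu)]
          · rw [mul_left_comm, coordIter_mul_coordIter hγ hbd (x :: e) f (hle u hu)]
      _ = ((shuffles (x :: e) (y :: f)).map fun w => coordIter γ' w s t).sum := by
          rw [integral_apply_mul_sum_coordIter hγ hbd, integral_apply_mul_sum_coordIter hγ hbd,
            shuffles, List.map_append, List.sum_append, List.map_map, List.map_map]
          rfl
  termination_by e f => e.length + f.length

theorem integral_coordIter_mul_coordIter_mul_apply (hγ : StronglyMeasurable γ')
    (hbd : ∀ u, ‖γ' u‖ ≤ C) (e f : List (V →L[ℝ] ℝ)) (g : V →L[ℝ] ℝ) {a b : ℝ} (hab : a ≤ b) :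
    ∫ u in a..b, coordIter γ' e a u * (coordIter γ' f a u * g (γ' u)) =
      ((shuffles e f).map fun w => coordIter γ' (w ++ [g]) a b).sum := by
  calc ∫ u in a..b, coordIter γ' e a u * (coordIter γ' f a u * g (γ' u))
      = ∫ u in a..b, ((shuffles e f).map fun w => coordIter γ' w a u * g (γ' u)).sum := by
        refine intervalIntegral.integral_congr fun u hu => ?_
        rw [uIcc_of_le hab] at hu
        rw [← mul_assoc, coordIter_mul_coordIter hγ hbd e f hu.1, List.sum_map_mul_right]
    _ = _ := by
        rw [intervalIntegral.integral_list_sum_map _ _ fun w _ =>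
          intervalIntegrable_coordIter_mul_apply hγ hbd w g a b]
        exact congrArg List.sum (List.map_congr_left fun w _ =>
          (coordIter_append_singleton hγ hbd w g hab).symm)

end CoordIter

/-- Let `e` and `f = f̃ ⊗ f_s` (with `f̃ = fTail` and last letter `g = f_s`,
so `f` has length `s ≥ 1`) be words of linear functionals, and `γ` a bounded-variation path
with bounded measurable derivative density `γ'`. Then the double (iterated Stieltjes)
integral `∫∫_{a<u_1<u_2<b} dX^e_{a,u_1} dX^f_{a,u_2}` — i.e.
`∫_a^b X^e_{a,u} · X^{f̃}_{a,u} · f_s(γ'_u) du` — equals the coordinate iterated integral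
`X^{(e ⧢ f̃) ⊗ f_s}_{a,b}`.  In particular an iterated integral of coordinate iterated
integrals of `γ` is itself a (linear combination of) coordinate iterated integral(s) of `γ`. -/
theorem iterated_integral_of_coordIter
    {V : Type*} [NormedAddCommGroup V] [NormedSpace ℝ V]
    (γ' : ℝ → V) (a b : ℝ) (hab : a ≤ b)
    (hmeas : AEStronglyMeasurable γ' volume)
    (C : ℝ) (hbd : ∀ u, ‖γ' u‖ ≤ C)
    (e fTail : List (V →L[ℝ] ℝ)) (g : V →L[ℝ] ℝ) :
    (∫ u in a..b, coordIter γ' e a u * (coordIter γ' fTail a u * g (γ' u))) =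
      ((shuffles e fTail).map fun w => coordIter γ' (w ++ [g]) a b).sum := by
  obtain ⟨γ₁, hγ₁, hbd₁, hae⟩ := hmeas.exists_stronglyMeasurable_forall_norm_le hbd
  have hcongr := coordIter_congr_ae hae
  calc ∫ u in a..b, coordIter γ' e a u * (coordIter γ' fTail a u * g (γ' u))
      = ∫ u in a..b, coordIter γ₁ e a u * (coordIter γ₁ fTail a u * g (γ₁ u)) := by
        refine intervalIntegral.integral_congr_ae ?_
        filter_upwards [hae] with u hu _
        rw [hu, hcongr, hcongr]
    _ = ((shuffles e fTail).map fun w => coordIter γ₁ (w ++ [g]) a b).sum :=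
        integral_coordIter_mul_coordIter_mul_apply hγ₁ hbd₁ e fTail g hab
    _ = ((shuffles e fTail).map fun w => coordIter γ' (w ++ [g]) a b).sum := by
        simp only [hcongr]
end

section
/- Let γ : [0,T] → V be a unit-speed bounded variation path with occupation measure μ, and let ω_n be a uniformly bounded sequence of μ-integrable 1-forms with values in a normed space W converging to ω in L^1(μ). Then for each r, the r-th iterated integral of the line integral ∫ ω_n(dγ) converges to the r-th iterated integral of ∫ ω(dγ) in W^{⊗r}. -/
/-!
For vectors bounded by `C`, multilinearity gives
`‖φ a - φ b‖ ≤ ‖φ‖ r C^(r-1) ∑ i, ‖a i - b i‖`. Hence, with `a i = ωₙ(γ uᵢ)(γ' uᵢ)` and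
`b i = ω(γ uᵢ)(γ' uᵢ)`, the integrands over the simplex differ by at most a sum of functions of a
single coordinate `uᵢ`. Enlarging the simplex to the cube `[0,T]^r`, each of these integrates to
`T^(r-1)` times the `L¹[0,T]` distance of the line-integrands, which unit speed bounds by
`∫ ‖ωₙ(γ t) - ω(γ t)‖ dt → 0`. The bound `‖ω(γ t)‖ ≤ C` used for `b` is inherited a.e. from the
`ωₙ` through `L¹` convergence.
-/

open MeasureTheory Set Filter TopologicalSpace
open scoped ENNReal Topology

/-- The open simplex `{0 < u_1 < … < u_r < T}` inside `Fin r → ℝ`. -/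
def simplexSet (r : ℕ) (T : ℝ) : Set (Fin r → ℝ) :=
  {u | (∀ i j : Fin r, i < j → u i < u j) ∧ ∀ i, u i ∈ Set.Ioo 0 T}

/-- Up to a.e. equality the components take values in a common separable set, whose countable
powers are second countable; there measurability suffices for strong measurability. -/
theorem aestronglyMeasurable_pi_lambda {α ι W : Type*} [MeasurableSpace α] {μ : Measure α}
    [Countable ι] [TopologicalSpace W] [PseudoMetrizableSpace W] {f : ι → α → W}
    (hf : ∀ i, AEStronglyMeasurable (f i) μ) :
    AEStronglyMeasurable (fun a i => f i a) μ := by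
  borelize W
  let g i := (hf i).mk (f i)
  have hg i : StronglyMeasurable (g i) := (hf i).stronglyMeasurable_mk
  let t : Set W := ⋃ i, range (g i)
  have : SecondCountableTopology t :=
    (IsSeparable.iUnion fun i => (hg i).isSeparable_range).secondCountableTopology
  let G : α → ι → t := fun a i => ⟨g i a, mem_iUnion.2 ⟨i, mem_range_self a⟩⟩
  have hG : StronglyMeasurable G :=
    (measurable_pi_lambda _ fun i => (hg i).measurable.subtype_mk).stronglyMeasurable
  refine ⟨fun a i => G a i, (continuous_pi fun i =>
    continuous_subtype_val.comp (continuous_apply i)).comp_stronglyMeasurable hG, ?_⟩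
  filter_upwards [ae_all_iff.2 fun i => (hf i).ae_eq_mk] with a ha
  exact funext ha

section Pi

variable {α : Type*} [MeasurableSpace α] {μ : Measure α} {ι : Type*} [Fintype ι]

theorem lintegral_comp_eval [SigmaFinite μ] (i : ι) {f : α → ℝ≥0∞} (hf : AEMeasurable f μ) :
    ∫⁻ x, f (x i) ∂Measure.pi (fun _ : ι => μ) =
      μ univ ^ (Fintype.card ι - 1) * ∫⁻ t, f t ∂μ := by
  classical
  have hmap := Measure.pi_map_eval (fun _ : ι => μ) i
  rw [← lintegral_map' (by rw [hmap]; exact hf.smul_measure _)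
    (measurable_pi_apply i).aemeasurable, hmap, lintegral_smul_measure, Finset.prod_const,
    Finset.card_erase_of_mem (Finset.mem_univ i), Finset.card_univ, smul_eq_mul]

theorem ae_comp_eval [SigmaFinite μ] {p : α → Prop} (h : ∀ᵐ t ∂μ, p t) :
    ∀ᵐ x ∂Measure.pi (fun _ : ι => μ), ∀ i, p (x i) :=
  ae_all_iff.2 fun _ => Measure.tendsto_eval_ae_ae.eventually h

end Pi

theorem ae_norm_le_of_tendsto_lintegral_enorm_sub {α E β : Type*} [MeasurableSpace α]
    {μ : Measure α} [NormedAddCommGroup E] {l : Filter β} [l.NeBot] {F : β → α → E} {f : α → E}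
    {C : ℝ} (hf : AEStronglyMeasurable f μ) (hF : ∀ n, ∀ᵐ t ∂μ, ‖F n t‖ ≤ C)
    (hlim : Tendsto (fun n => ∫⁻ t, ‖F n t - f t‖ₑ ∂μ) l (𝓝 0)) :
    ∀ᵐ t ∂μ, ‖f t‖ ≤ C := by
  have hexcess n : ∫⁻ t, ENNReal.ofReal (‖f t‖ - C) ∂μ ≤ ∫⁻ t, ‖F n t - f t‖ₑ ∂μ := by
    refine lintegral_mono_ae ((hF n).mono fun t ht => ?_)
    rw [← ofReal_norm, norm_sub_rev]
    exact ENNReal.ofReal_le_ofReal (by linarith [norm_sub_norm_le (f t) (F n t)])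
  have hzero : ∫⁻ t, ENNReal.ofReal (‖f t‖ - C) ∂μ = 0 :=
    nonpos_iff_eq_zero.1 (ge_of_tendsto hlim (Eventually.of_forall hexcess))
  filter_upwards [(lintegral_eq_zero_iff'
    (hf.norm.sub aestronglyMeasurable_const).aemeasurable.ennreal_ofReal).1 hzero] with t ht
  simpa [sub_nonpos] using ht

theorem ContinuousMultilinearMap.norm_image_sub_le_sum_of_norm_le {ι W F : Type*} [Fintype ι]
    [NormedAddCommGroup W] [NormedSpace ℝ W] [NormedAddCommGroup F] [NormedSpace ℝ F]
    (φ : ContinuousMultilinearMap ℝ (fun _ : ι => W) F) {C : ℝ} (hC : 0 ≤ C) {a b : ι → W}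
    (ha : ∀ i, ‖a i‖ ≤ C) (hb : ∀ i, ‖b i‖ ≤ C) :
    ‖φ a - φ b‖ ≤ ‖φ‖ * Fintype.card ι * C ^ (Fintype.card ι - 1) * ∑ i, ‖a i - b i‖ := by
  have hmax : max ‖a‖ ‖b‖ ≤ C :=
    max_le ((pi_norm_le_iff_of_nonneg hC).2 ha) ((pi_norm_le_iff_of_nonneg hC).2 hb)
  have hsum : ‖a - b‖ ≤ ∑ i, ‖a i - b i‖ :=
    (pi_norm_le_iff_of_nonneg (by positivity)).2 fun i =>
      Finset.single_le_sum (f := fun i => ‖a i - b i‖) (fun _ _ => norm_nonneg _)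
        (Finset.mem_univ i)
  calc ‖φ a - φ b‖
      ≤ ‖φ‖ * Fintype.card ι * max ‖a‖ ‖b‖ ^ (Fintype.card ι - 1) * ‖a - b‖ :=
        φ.norm_image_sub_le a b
    _ ≤ ‖φ‖ * Fintype.card ι * C ^ (Fintype.card ι - 1) * ∑ i, ‖a i - b i‖ := by
        gcongr

section MultilinearIntegrand

variable {α ι W F : Type*} [MeasurableSpace α] {μ : Measure α} [Fintype ι]
  [NormedAddCommGroup W] [NormedSpace ℝ W] [NormedAddCommGroup F] [NormedSpace ℝ F]
  (φ : ContinuousMultilinearMap ℝ (fun _ : ι => W) F)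

theorem aestronglyMeasurable_continuousMultilinearMap_comp_eval [SigmaFinite μ] {f : α → W}
    (hf : AEStronglyMeasurable f μ) :
    AEStronglyMeasurable (fun x => φ (fun i => f (x i))) (Measure.pi fun _ : ι => μ) :=
  φ.coe_continuous.comp_aestronglyMeasurable (aestronglyMeasurable_pi_lambda fun i =>
    hf.comp_quasiMeasurePreserving (Measure.quasiMeasurePreserving_eval _ i))

theorem integrable_continuousMultilinearMap_comp_eval [IsFiniteMeasure μ] {f : α → W} {C : ℝ}
    (hf : AEStronglyMeasurable f μ) (hfC : ∀ᵐ t ∂μ, ‖f t‖ ≤ C) :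
    Integrable (fun x => φ (fun i => f (x i))) (Measure.pi fun _ : ι => μ) := by
  refine .of_bound (aestronglyMeasurable_continuousMultilinearMap_comp_eval φ hf)
    (‖φ‖ * |C| ^ Fintype.card ι) ?_
  filter_upwards [ae_comp_eval hfC] with x hx
  exact φ.le_opNorm_mul_pow_card_of_le
    ((pi_norm_le_iff_of_nonneg (abs_nonneg C)).2 fun i => (hx i).trans (le_abs_self C))

variable {β : Type*} {l : Filter β} {f : β → α → W} {g : α → W} {C : ℝ}

theorem tendsto_lintegral_enorm_continuousMultilinearMap_comp_eval_sub [IsFiniteMeasure μ]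
    (hC : 0 ≤ C) (hf : ∀ n, AEStronglyMeasurable (f n) μ) (hg : AEStronglyMeasurable g μ)
    (hfC : ∀ n, ∀ᵐ t ∂μ, ‖f n t‖ ≤ C) (hgC : ∀ᵐ t ∂μ, ‖g t‖ ≤ C)
    (hlim : Tendsto (fun n => ∫⁻ t, ‖f n t - g t‖ₑ ∂μ) l (𝓝 0)) :
    Tendsto (fun n => ∫⁻ x, ‖φ (fun i => f n (x i)) - φ (fun i => g (x i))‖ₑ
      ∂Measure.pi fun _ : ι => μ) l (𝓝 0) := by
  set K := ‖φ‖ * Fintype.card ι * C ^ (Fintype.card ι - 1)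
  have hpointwise n : ∀ᵐ x ∂Measure.pi (fun _ : ι => μ),
      ‖φ (fun i => f n (x i)) - φ (fun i => g (x i))‖ₑ ≤
        ENNReal.ofReal K * ∑ i, ‖f n (x i) - g (x i)‖ₑ := by
    filter_upwards [ae_comp_eval (hfC n), ae_comp_eval hgC] with x hfx hgx
    calc ‖φ (fun i => f n (x i)) - φ (fun i => g (x i))‖ₑ
        = ENNReal.ofReal ‖φ (fun i => f n (x i)) - φ (fun i => g (x i))‖ := (ofReal_norm _).symm
      _ ≤ ENNReal.ofReal (K * ∑ i, ‖f n (x i) - g (x i)‖) :=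
        ENNReal.ofReal_le_ofReal (φ.norm_image_sub_le_sum_of_norm_le hC hfx hgx)
      _ = ENNReal.ofReal K * ∑ i, ‖f n (x i) - g (x i)‖ₑ := by
        rw [ENNReal.ofReal_mul (by positivity),
          ENNReal.ofReal_sum_of_nonneg fun _ _ => norm_nonneg _]
        simp only [ofReal_norm]
  have hbound n : ∫⁻ x, ‖φ (fun i => f n (x i)) - φ (fun i => g (x i))‖ₑ
      ∂Measure.pi (fun _ : ι => μ) ≤
        ENNReal.ofReal K * Fintype.card ι * μ univ ^ (Fintype.card ι - 1) *
          ∫⁻ t, ‖f n t - g t‖ₑ ∂μ := by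
    have hdiff : AEMeasurable (fun t => ‖f n t - g t‖ₑ) μ := ((hf n).sub hg).enorm
    calc _ ≤ ∫⁻ x, ENNReal.ofReal K * ∑ i, ‖f n (x i) - g (x i)‖ₑ
          ∂Measure.pi (fun _ : ι => μ) := lintegral_mono_ae (hpointwise n)
      _ = ENNReal.ofReal K *
          ∑ i : ι, μ univ ^ (Fintype.card ι - 1) * ∫⁻ t, ‖f n t - g t‖ₑ ∂μ := by
          have hdiff_eval (i : ι) : AEMeasurable (fun x : ι → α => ‖f n (x i) - g (x i)‖ₑ)
              (Measure.pi fun _ : ι => μ) :=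
            hdiff.comp_quasiMeasurePreserving (Measure.quasiMeasurePreserving_eval _ i)
          rw [lintegral_const_mul' _ _ ENNReal.ofReal_ne_top,
            lintegral_finsetSum' _ fun i _ => hdiff_eval i]
          simp only [lintegral_comp_eval _ hdiff]
      _ = _ := by
          rw [Finset.sum_const, Finset.card_univ, nsmul_eq_mul]
          ring
  refine tendsto_of_tendsto_of_tendsto_of_le_of_le tendsto_const_nhds ?_ (fun _ => bot_le)
    hbound
  simpa using ENNReal.Tendsto.const_mul hlim (Or.inr (by finiteness))

theorem tendsto_integral_continuousMultilinearMap_comp_eval [IsFiniteMeasure μ]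
    {ν : Measure (ι → α)} (hν : ν ≤ Measure.pi fun _ : ι => μ) (hC : 0 ≤ C)
    (hf : ∀ n, AEStronglyMeasurable (f n) μ) (hg : AEStronglyMeasurable g μ)
    (hfC : ∀ n, ∀ᵐ t ∂μ, ‖f n t‖ ≤ C) (hgC : ∀ᵐ t ∂μ, ‖g t‖ ≤ C)
    (hlim : Tendsto (fun n => ∫⁻ t, ‖f n t - g t‖ₑ ∂μ) l (𝓝 0)) :
    Tendsto (fun n => ∫ x, φ (fun i => f n (x i)) ∂ν) l
      (𝓝 (∫ x, φ (fun i => g (x i)) ∂ν)) := by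
  refine tendsto_integral_of_L1 _
    ((aestronglyMeasurable_continuousMultilinearMap_comp_eval φ hg).mono_measure hν)
    (.of_forall fun n =>
      (integrable_continuousMultilinearMap_comp_eval φ (hf n) (hfC n)).mono_measure hν) ?_
  exact tendsto_of_tendsto_of_tendsto_of_le_of_le tendsto_const_nhds
    (tendsto_lintegral_enorm_continuousMultilinearMap_comp_eval_sub φ hC hf hg hfC hgC hlim)
    (fun _ => bot_le) fun _ => lintegral_mono' hν le_rfl

end MultilinearIntegrand

theorem tendsto_lintegral_enorm_apply_sub {α V W β : Type*} [MeasurableSpace α]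
    {μ : Measure α} [NormedAddCommGroup V] [NormedSpace ℝ V] [NormedAddCommGroup W]
    [NormedSpace ℝ W] {l : Filter β} {L : β → α → V →L[ℝ] W} {M : α → V →L[ℝ] W} {v : α → V}
    (hv : ∀ᵐ t ∂μ, ‖v t‖ ≤ 1) (hlim : Tendsto (fun n => ∫⁻ t, ‖L n t - M t‖ₑ ∂μ) l (𝓝 0)) :
    Tendsto (fun n => ∫⁻ t, ‖L n t (v t) - M t (v t)‖ₑ ∂μ) l (𝓝 0) := by
  refine tendsto_of_tendsto_of_tendsto_of_le_of_le tendsto_const_nhds hlim (fun _ => bot_le)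
    fun n => lintegral_mono_ae (hv.mono fun t ht => ?_)
  rw [← sub_apply, enorm_le_iff_norm_le]
  simpa using (L n t - M t).le_opNorm_of_le ht

theorem iterated_integral_line_integral_continuity_general
    {V W : Type*} [NormedAddCommGroup V] [NormedSpace ℝ V]
    [NormedAddCommGroup W] [NormedSpace ℝ W]
    (T : ℝ) (γ γ' : ℝ → V)
    (hspeed : ∀ᵐ t ∂(volume.restrict (Set.Icc 0 T)), ‖γ' t‖ = 1)
    (hmeasγ' : AEStronglyMeasurable γ' volume)
    (ωn : ℕ → V → (V →L[ℝ] W)) (ω : V → (V →L[ℝ] W))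
    (C : ℝ) (hbound : ∀ n x, ‖ωn n x‖ ≤ C)
    (hmeasn : ∀ n, AEStronglyMeasurable (fun t => ωn n (γ t)) (volume.restrict (Set.Icc 0 T)))
    (hmeasω : AEStronglyMeasurable (fun t => ω (γ t)) (volume.restrict (Set.Icc 0 T)))
    (hintω : IntegrableOn (fun t => ‖ω (γ t)‖) (Set.Icc 0 T))
    (hconv : Tendsto (fun n => ∫ t in Set.Icc 0 T, ‖ωn n (γ t) - ω (γ t)‖) atTop (nhds 0))
    (r : ℕ) (φ : ContinuousMultilinearMap ℝ (fun _ : Fin r => W) ℝ) :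
    Tendsto (fun n => ∫ u in simplexSet r T, φ (fun i => (ωn n (γ (u i))) (γ' (u i))))
      atTop (nhds (∫ u in simplexSet r T, φ (fun i => (ω (γ (u i))) (γ' (u i))))) := by
  set μ := volume.restrict (Icc (0 : ℝ) T)
  have hC : 0 ≤ C := (norm_nonneg _).trans (hbound 0 0)
  have hsimplex : volume.restrict (simplexSet r T) ≤ Measure.pi fun _ : Fin r => μ := by
    have hsub : simplexSet r T ⊆ univ.pi fun _ => Icc 0 T := fun u hu i _ =>
      Ioo_subset_Icc_self (hu.2 i)
    rw [← Measure.restrict_pi_pi, ← volume_pi]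
    exact Measure.restrict_mono hsub le_rfl
  have hconv' : Tendsto (fun n => ∫⁻ t, ‖ωn n (γ t) - ω (γ t)‖ₑ ∂μ) atTop (𝓝 0) := by
    have hint n : Integrable (fun t => ωn n (γ t) - ω (γ t)) μ :=
      (Integrable.of_bound (hmeasn n) C (.of_forall fun t => hbound n _)).sub
        ((integrable_norm_iff hmeasω).1 hintω)
    simpa [ofReal_integral_norm_eq_lintegral_enorm (hint _)] using ENNReal.tendsto_ofReal hconv
  have hωC : ∀ᵐ t ∂μ, ‖ω (γ t)‖ ≤ C := ae_norm_le_of_tendsto_lintegral_enorm_sub hmeasω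
    (fun n => .of_forall fun t => hbound n _) hconv'
  have happly {L : ℝ → V →L[ℝ] W} (hL : AEStronglyMeasurable L μ) (hLC : ∀ᵐ t ∂μ, ‖L t‖ ≤ C) :
      AEStronglyMeasurable (fun t => L t (γ' t)) μ ∧ ∀ᵐ t ∂μ, ‖L t (γ' t)‖ ≤ C := by
    refine ⟨isBoundedBilinearMap_apply.continuous.comp_aestronglyMeasurable₂ hL
      hmeasγ'.restrict, ?_⟩
    filter_upwards [hspeed, hLC] with t ht htC
    exact ((L t).le_opNorm_of_le ht.le).trans (by rwa [mul_one])
  have hωn n := happly (hmeasn n) (.of_forall fun t => hbound n _)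
  have hω := happly hmeasω hωC
  exact tendsto_integral_continuousMultilinearMap_comp_eval φ hsimplex hC
    (fun n => (hωn n).1) hω.1 (fun n => (hωn n).2) hω.2
    (tendsto_lintegral_enorm_apply_sub (hspeed.mono fun t ht => ht.le) hconv')

/-- Let `γ : [0,T] → V` be a unit-speed bounded-variation path (with a.e.
derivative `γ'` of norm one) and let `ωn` be a uniformly bounded sequence of integrable
`1`-forms with values in `Hom(V,W)` converging to `ω` in `L¹` of the occupation measure —
equivalently, `∫_0^T ‖ωn(γ_t) − ω(γ_t)‖ dt → 0`.  Then for each `r` the `r`-th iterated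
integral of the line integral `∫ ωn(dγ)` converges in `W^{⊗r}` to that of `∫ ω(dγ)`; the
convergence in the projective tensor norm is expressed via its dual characterization:
pairings with every continuous `r`-multilinear functional converge. -/
theorem iterated_integral_line_integral_continuity
    {V W : Type*} [NormedAddCommGroup V] [NormedSpace ℝ V]
    [NormedAddCommGroup W] [NormedSpace ℝ W]
    (T : ℝ) (hT : 0 ≤ T) (γ γ' : ℝ → V)
    (hderiv : ∀ᵐ t ∂(volume.restrict (Set.Icc 0 T)), HasDerivAt γ (γ' t) t)
    (hspeed : ∀ᵐ t ∂(volume.restrict (Set.Icc 0 T)), ‖γ' t‖ = 1)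
    (hmeasγ' : AEStronglyMeasurable γ' volume)
    (ωn : ℕ → V → (V →L[ℝ] W)) (ω : V → (V →L[ℝ] W))
    (C : ℝ) (hbound : ∀ n x, ‖ωn n x‖ ≤ C)
    (hmeasn : ∀ n, AEStronglyMeasurable (fun t => ωn n (γ t)) (volume.restrict (Set.Icc 0 T)))
    (hmeasω : AEStronglyMeasurable (fun t => ω (γ t)) (volume.restrict (Set.Icc 0 T)))
    (hintω : IntegrableOn (fun t => ‖ω (γ t)‖) (Set.Icc 0 T))
    (hconv : Tendsto (fun n => ∫ t in Set.Icc 0 T, ‖ωn n (γ t) - ω (γ t)‖) atTop (nhds 0))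
    (r : ℕ) (φ : ContinuousMultilinearMap ℝ (fun _ : Fin r => W) ℝ) :
    Tendsto (fun n => ∫ u in simplexSet r T, φ (fun i => (ωn n (γ (u i))) (γ' (u i))))
      atTop (nhds (∫ u in simplexSet r T, φ (fun i => (ω (γ (u i))) (γ' (u i))))) :=
  iterated_integral_line_integral_continuity_general T γ γ' hspeed hmeasγ' ωn ω C hbound hmeasn
    hmeasω hintω hconv r φ
end

section
/- Every weakly linear path that is a loop is tree-like: if γ : [0,T] → M takes values in a single geodesic of a geodesic metric space M and γ_0 = γ_T, then h(t) := d(γ_0, γ_t) is a height function for γ, i.e. h is continuous, nonnegative, h(0) = h(T) = 0, and d(γ_s, γ_t) ≤ h(s) + h(t) − 2 inf_{u ∈ [s,t]} h(u) for all s ≤ t. -/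
open Set Function

/-!
Inverting the isometry of the geodesic turns the loop into a continuous real function `f` with
`d(γ u, γ v) = |f u - f v|`, so the claim is a statement about real functions with
`c := f 0` as base point. If `c` lies between `f s` and `f t`, the intermediate value theorem
puts a zero of `u ↦ |f u - c|` in `[s, t]` and the inequality is the triangle inequality.
Otherwise `f s` and `f t` lie on the same side of `c`, so `|f s - f t|` is the difference of
their distances to `c`, i.e. their sum minus twice the smaller one, which bounds the infimum.
-/

theorem dist_invFunOn_eq {α M : Type*} [PseudoMetricSpace α] [PseudoMetricSpace M] [Nonempty α]
    {φ : α → M} {s : Set α} (hφ : ∀ x ∈ s, ∀ y ∈ s, dist (φ x) (φ y) = dist x y)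
    {p q : M} (hp : p ∈ φ '' s) (hq : q ∈ φ '' s) :
    dist (invFunOn φ s p) (invFunOn φ s q) = dist p q := by
  rw [← hφ _ (invFunOn_mem hp) _ (invFunOn_mem hq), invFunOn_eq hp, invFunOn_eq hq]

theorem lipschitzOnWith_invFunOn {α M : Type*} [PseudoMetricSpace α] [PseudoMetricSpace M]
    [Nonempty α] {φ : α → M} {s : Set α}
    (hφ : ∀ x ∈ s, ∀ y ∈ s, dist (φ x) (φ y) = dist x y) :
    LipschitzOnWith 1 (invFunOn φ s) (φ '' s) :=
  .mk_one fun _ hp _ hq => (dist_invFunOn_eq hφ hp hq).le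

theorem Real.dist_eq_abs_sub_dist_of_notMem_uIcc {x y c : ℝ} (h : c ∉ uIcc x y) :
    dist x y = |dist c x - dist c y| := by
  rw [uIcc, mem_Icc, not_and_or, not_le, not_le] at h
  simp only [Real.dist_eq]
  rcases h with h | h
  · obtain ⟨hx, hy⟩ := lt_inf_iff.1 h
    rw [abs_of_neg (sub_neg.2 hx), abs_of_neg (sub_neg.2 hy)]
    congr 1; ring
  · obtain ⟨hx, hy⟩ := sup_lt_iff.1 h
    rw [abs_of_pos (sub_pos.2 hx), abs_of_pos (sub_pos.2 hy), abs_sub_comm]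
    congr 1; ring

theorem dist_le_dist_add_dist_sub_two_mul_sInf {f : ℝ → ℝ} {a b : ℝ} (hab : a ≤ b)
    (hf : ContinuousOn f (Icc a b)) (c : ℝ) :
    dist (f a) (f b) ≤
      dist c (f a) + dist c (f b) - 2 * sInf ((fun u => dist c (f u)) '' Icc a b) := by
  set m := sInf ((fun u => dist c (f u)) '' Icc a b)
  have hbdd : BddBelow ((fun u => dist c (f u)) '' Icc a b) :=
    ⟨0, by rintro _ ⟨u, -, rfl⟩; exact dist_nonneg⟩
  have hm_le : ∀ u ∈ Icc a b, m ≤ dist c (f u) :=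
    fun u hu => csInf_le hbdd (mem_image_of_mem _ hu)
  by_cases hc : c ∈ uIcc (f a) (f b)
  · rw [← uIcc_of_le hab] at hf
    obtain ⟨u, hu, rfl⟩ := intermediate_value_uIcc hf hc
    have hm_nonpos : m ≤ 0 := dist_self (f u) ▸ hm_le u (uIcc_of_le hab ▸ hu)
    linarith [dist_triangle_left (f a) (f b) (f u)]
  · have hm_min : m ≤ min (dist c (f a)) (dist c (f b)) :=
      le_min (hm_le a (left_mem_Icc.2 hab)) (hm_le b (right_mem_Icc.2 hab))
    calc dist (f a) (f b) = |dist c (f a) - dist c (f b)| :=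
          Real.dist_eq_abs_sub_dist_of_notMem_uIcc hc
      _ = dist c (f a) + dist c (f b) - 2 * min (dist c (f a)) (dist c (f b)) := by
          rw [← max_sub_min_eq_abs']; linarith [min_add_max (dist c (f a)) (dist c (f b))]
      _ ≤ dist c (f a) + dist c (f b) - 2 * m := by linarith

/-- Every weakly linear (weakly geodesic) loop is tree-like: if
`γ : [0,T] → M` is a continuous path taking values in a single geodesic of a metric space `M`
(an isometric copy of a subset of `ℝ`) and `γ T = γ 0`, then `h(t) := d(γ 0, γ t)` is a
height function for `γ`: it is continuous and nonnegative on `[0,T]`, vanishes at both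
endpoints, and `d(γ s, γ t) ≤ h s + h t − 2·inf_{[s,t]} h` for all `s ≤ t` in `[0,T]`. -/
theorem weakly_linear_loop_treeLike
    {M : Type*} [MetricSpace M] (T : ℝ) (hT : 0 ≤ T)
    (γ : ℝ → M) (hcont : ContinuousOn γ (Set.Icc 0 T))
    (hloop : γ T = γ 0)
    (hgeo : ∃ (s : Set ℝ) (φ : ℝ → M),
      (∀ x ∈ s, ∀ y ∈ s, dist (φ x) (φ y) = |x - y|) ∧
      ∀ u ∈ Set.Icc 0 T, γ u ∈ φ '' s) :
    (∀ u ∈ Set.Icc 0 T, 0 ≤ dist (γ 0) (γ u)) ∧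
    dist (γ 0) (γ 0) = 0 ∧ dist (γ 0) (γ T) = 0 ∧
    ContinuousOn (fun u => dist (γ 0) (γ u)) (Set.Icc 0 T) ∧
    ∀ s' t', s' ∈ Set.Icc 0 T → t' ∈ Set.Icc 0 T → s' ≤ t' →
      dist (γ s') (γ t') ≤ dist (γ 0) (γ s') + dist (γ 0) (γ t')
        - 2 * sInf ((fun u => dist (γ 0) (γ u)) '' Set.Icc s' t') := by
  obtain ⟨S, φ, hiso, hmem⟩ := hgeo
  simp_rw [← Real.dist_eq] at hiso
  set f := invFunOn φ S ∘ γ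
  have hdist : ∀ u ∈ Icc 0 T, ∀ v ∈ Icc 0 T, dist (γ u) (γ v) = dist (f u) (f v) :=
    fun u hu v hv => (dist_invFunOn_eq hiso (hmem u hu) (hmem v hv)).symm
  have hf : ContinuousOn f (Icc 0 T) :=
    (lipschitzOnWith_invFunOn hiso).continuousOn.comp hcont hmem
  have h0 : (0 : ℝ) ∈ Icc 0 T := left_mem_Icc.2 hT
  refine ⟨fun _ _ => dist_nonneg, dist_self _, by rw [hloop, dist_self],
    (continuous_const.dist continuous_id).comp_continuousOn hcont, fun s t hs ht hst => ?_⟩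
  have hsub : Icc s t ⊆ Icc 0 T := Icc_subset_Icc hs.1 ht.2
  rw [image_congr fun u hu => hdist 0 h0 u (hsub hu), hdist s hs t ht, hdist 0 h0 s hs,
    hdist 0 h0 t ht]
  exact dist_le_dist_add_dist_sub_two_mul_sInf hst (hf.mono hsub) (f 0)
end

section
/- Let G ∈ SO(I_d) be an isometry of the hyperboloid model of d-dimensional hyperbolic space, where I_d(x,y) = ∑_{i=1}^d x_i y_i − x_{d+1} y_{d+1}. Then the Euclidean operator norm of G as an element of Hom(ℝ^{d+1}, ℝ^{d+1}) satisfies ‖G‖ ≥ e^{d(o, G·o)}, where o = (0,…,0,1) and d is the hyperbolic distance given by cosh d(x,y) = −I_d(x,y). -/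
/-!
Write `J = diag(1, …, 1, -1)`, so that `I_d(x, y) = ⟪J x, y⟫`. Preserving `I_d` means
`Gᵀ J G = J`, hence `G` is invertible and `Gᵀ` preserves `I_d` as well; in particular the last
row `r = Gᵀ o = (r', c)` of `G` satisfies `|r'|² = c² - 1`, where `c = cosh ρ`.
On the light cone `I_d(x, x) = 0` one has `‖x‖ = √2 |x_{d+1}|`, and the light-like vector
`u = (r', sinh ρ)` is sent to a light-like vector with last coordinate
`⟪r, u⟫ = sinh ρ (cosh ρ + sinh ρ)`, so `‖G u‖ = e^ρ ‖u‖`. For `ρ = 0` it suffices that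
`‖G o‖² = 2 (G o)_{d+1}² - 1 ≥ 1`.
-/

open scoped BigOperators

/-- The Lorentz form `I_d(x,y) = ∑_{i=1}^d x_i y_i − x_{d+1} y_{d+1}` on `ℝ^{d+1}`. -/
def lorentzForm (d : ℕ) (x y : EuclideanSpace ℝ (Fin (d + 1))) : ℝ :=
  (∑ i : Fin d, x i.castSucc * y i.castSucc) - x (Fin.last d) * y (Fin.last d)

open scoped RealInnerProductSpace InnerProduct

local notation "𝕄" d:max => EuclideanSpace ℝ (Fin (d + 1))

section

variable {d : ℕ}

noncomputable def timeReflection (x : 𝕄 d) : 𝕄 d :=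
  x - (2 * x (Fin.last d)) • EuclideanSpace.single (Fin.last d) 1

def PreservesLorentzForm (G : 𝕄 d →L[ℝ] 𝕄 d) : Prop :=
  ∀ x y, lorentzForm d (G x) (G y) = lorentzForm d x y

lemma inner_single_last_left (x : 𝕄 d) :
    ⟪EuclideanSpace.single (Fin.last d) 1, x⟫ = x (Fin.last d) := by
  simp [EuclideanSpace.inner_single_left]

lemma lorentzForm_eq_inner_sub (x y : 𝕄 d) :
    lorentzForm d x y = ⟪x, y⟫ - 2 * (x (Fin.last d) * y (Fin.last d)) := by
  simp only [lorentzForm, PiLp.inner_apply, RCLike.inner_apply, conj_trivial, Fin.sum_univ_castSucc]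
  simp only [mul_comm (y _) (x _)]
  ring

lemma lorentzForm_comm (x y : 𝕄 d) : lorentzForm d x y = lorentzForm d y x := by
  rw [lorentzForm_eq_inner_sub, lorentzForm_eq_inner_sub, real_inner_comm, mul_comm (x _)]

lemma lorentzForm_single_last_left (x : 𝕄 d) :
    lorentzForm d (EuclideanSpace.single (Fin.last d) 1) x = - x (Fin.last d) := by
  rw [lorentzForm_eq_inner_sub, inner_single_last_left, PiLp.single_apply, if_pos rfl]
  ring

lemma lorentzForm_single_last_self :
    lorentzForm d (EuclideanSpace.single (Fin.last d) 1) (EuclideanSpace.single (Fin.last d) 1) =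
      -1 := by
  rw [lorentzForm_single_last_left, PiLp.single_apply, if_pos rfl]

lemma norm_sq_eq_lorentzForm_add (x : 𝕄 d) :
    ‖x‖ ^ 2 = lorentzForm d x x + 2 * x (Fin.last d) ^ 2 := by
  rw [lorentzForm_eq_inner_sub, real_inner_self_eq_norm_sq]
  ring

lemma norm_sq_of_lorentzForm_self_eq_zero {x : 𝕄 d} (h : lorentzForm d x x = 0) :
    ‖x‖ ^ 2 = 2 * x (Fin.last d) ^ 2 := by
  rw [norm_sq_eq_lorentzForm_add, h, zero_add]

lemma timeReflection_last (x : 𝕄 d) : timeReflection x (Fin.last d) = - x (Fin.last d) := by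
  simp only [timeReflection, PiLp.sub_apply, PiLp.smul_apply, PiLp.single_apply, if_pos,
    smul_eq_mul]
  ring

lemma inner_timeReflection_left (x y : 𝕄 d) : ⟪timeReflection x, y⟫ = lorentzForm d x y := by
  rw [timeReflection, inner_sub_left, real_inner_smul_left, inner_single_last_left,
    lorentzForm_eq_inner_sub]
  ring

lemma timeReflection_involutive : Function.Involutive (timeReflection (d := d)) := by
  intro x
  rw [timeReflection, timeReflection_last, timeReflection]
  module

lemma lorentzForm_timeReflection (x y : 𝕄 d) :
    lorentzForm d (timeReflection x) (timeReflection y) = lorentzForm d x y := by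
  rw [← inner_timeReflection_left, timeReflection_involutive, real_inner_comm,
    inner_timeReflection_left, lorentzForm_comm]

namespace PreservesLorentzForm

variable {G : 𝕄 d →L[ℝ] 𝕄 d} (hG : PreservesLorentzForm G)
include hG

lemma adjoint_timeReflection_apply (y : 𝕄 d) :
    (G†) (timeReflection (G y)) = timeReflection y := by
  refine ext_inner_right ℝ fun x => ?_
  rw [ContinuousLinearMap.adjoint_inner_left, inner_timeReflection_left,
    inner_timeReflection_left, hG]

lemma surjective : Function.Surjective G := by
  refine LinearMap.injective_iff_surjective (f := (G : 𝕄 d →ₗ[ℝ] 𝕄 d)) |>.mp fun x y hxy => ?_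
  have := congrArg (fun z => (G†) (timeReflection z)) hxy
  simpa [hG.adjoint_timeReflection_apply, timeReflection_involutive.injective.eq_iff] using this

lemma adjoint : PreservesLorentzForm (G†) := by
  intro x y
  obtain ⟨x', hx'⟩ := hG.surjective (timeReflection x)
  obtain ⟨y', hy'⟩ := hG.surjective (timeReflection y)
  rw [← timeReflection_involutive x, ← timeReflection_involutive y, ← hx', ← hy',
    hG.adjoint_timeReflection_apply, hG.adjoint_timeReflection_apply, lorentzForm_timeReflection,
    lorentzForm_timeReflection, hG]

lemma one_le_opNorm : 1 ≤ ‖G‖ := by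
  set o : 𝕄 d := EuclideanSpace.single (Fin.last d) 1
  have hGo : ‖G o‖ ^ 2 = 2 * G o (Fin.last d) ^ 2 - 1 := by
    rw [norm_sq_eq_lorentzForm_add, hG, lorentzForm_single_last_self]
    ring
  have hlast : G o (Fin.last d) ^ 2 ≤ ‖G o‖ ^ 2 := by
    simpa [sq_abs] using pow_le_pow_left₀ (abs_nonneg _) ((G o).norm_apply_le (Fin.last d)) 2
  have : 1 ≤ ‖G o‖ := by nlinarith [norm_nonneg (G o)]
  simpa [o] using this.trans (G.le_opNorm o)

lemma exists_norm_apply_eq {s : ℝ}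
    (hs : G (EuclideanSpace.single (Fin.last d) 1) (Fin.last d) ^ 2 - s ^ 2 = 1) :
    ∃ u : 𝕄 d, u (Fin.last d) = s ∧
      ‖G u‖ = |G (EuclideanSpace.single (Fin.last d) 1) (Fin.last d) + s| * ‖u‖ := by
  set o : 𝕄 d := EuclideanSpace.single (Fin.last d) 1
  set c := G o (Fin.last d)
  set r := (G†) o
  have happly (x : 𝕄 d) : G x (Fin.last d) = ⟪r, x⟫ := by
    rw [ContinuousLinearMap.adjoint_inner_left, inner_single_last_left]
  have ho_last : o (Fin.last d) = 1 := by simp [o]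
  have hr_last : r (Fin.last d) = c := by
    rw [← inner_single_last_left, real_inner_comm, ← happly]
  have hrr : ⟪r, r⟫ = 2 * c ^ 2 - 1 := by
    have := hG.adjoint o o
    rw [lorentzForm_eq_inner_sub, hr_last, lorentzForm_single_last_self] at this
    linarith
  set u := r + (s - c) • o
  have hu_last : u (Fin.last d) = s := by simp [u, hr_last, ho_last]
  have hru : ⟪r, u⟫ = s * (c + s) := by
    rw [inner_add_right, real_inner_smul_right, real_inner_comm o r, inner_single_last_left,
      hr_last, hrr]
    linear_combination hs
  have huu : ⟪u, u⟫ = 2 * s ^ 2 := by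
    rw [inner_add_left, hru, real_inner_smul_left, inner_single_last_left, hu_last]
    ring
  have hnull : lorentzForm d u u = 0 := by
    rw [lorentzForm_eq_inner_sub, huu, hu_last]; ring
  refine ⟨u, hu_last, ?_⟩
  have hsq : ‖G u‖ ^ 2 = (|c + s| * ‖u‖) ^ 2 := by
    rw [norm_sq_of_lorentzForm_self_eq_zero (by rw [hG, hnull]), mul_pow, sq_abs,
      norm_sq_of_lorentzForm_self_eq_zero hnull, happly, hru, hu_last]
    ring
  exact (sq_eq_sq₀ (norm_nonneg _) (by positivity)).1 hsq

end PreservesLorentzForm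

end

theorem lorentz_isometry_norm_lower_bound_general (d : ℕ)
    (G : EuclideanSpace ℝ (Fin (d + 1)) →L[ℝ] EuclideanSpace ℝ (Fin (d + 1)))
    (hpres : ∀ x y, lorentzForm d (G x) (G y) = lorentzForm d x y)
    (ρ : ℝ)
    (hdist : Real.cosh ρ =
      - lorentzForm d (EuclideanSpace.single (Fin.last d) 1)
          (G (EuclideanSpace.single (Fin.last d) 1))) :
    Real.exp ρ ≤ ‖G‖ := by
  have hG : PreservesLorentzForm G := hpres
  rcases eq_or_ne ρ 0 with rfl | hρ
  · simpa using hG.one_le_opNorm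
  have hc : G (EuclideanSpace.single (Fin.last d) 1) (Fin.last d) = Real.cosh ρ := by
    rw [hdist, lorentzForm_single_last_left, neg_neg]
  obtain ⟨u, hu_last, hGu⟩ := hG.exists_norm_apply_eq (s := Real.sinh ρ) (by
    rw [hc, Real.cosh_sq_sub_sinh_sq])
  rw [hc, Real.cosh_add_sinh, abs_of_pos (Real.exp_pos ρ)] at hGu
  have hu : 0 < ‖u‖ := norm_pos_iff.2 fun h0 => hρ <| Real.sinh_eq_zero.1 <| by
    rw [← hu_last, h0, PiLp.zero_apply]
  exact le_of_mul_le_mul_right (hGu ▸ G.le_opNorm u) hu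

/-- Let `G` be an isometry of the hyperboloid model of `d`-dimensional
hyperbolic space, i.e. a linear map of `ℝ^{d+1}` preserving the Lorentz form `I_d` (and
preserving the upper sheet containing `o = (0,…,0,1)`). If `ρ ≥ 0` is the hyperbolic distance
from `o` to `G·o`, characterized by `cosh ρ = −I_d(o, G·o)`, then the Euclidean operator norm
of `G` satisfies `‖G‖ ≥ e^ρ = e^{d(o, G·o)}`. -/
theorem lorentz_isometry_norm_lower_bound (d : ℕ)
    (G : EuclideanSpace ℝ (Fin (d + 1)) →L[ℝ] EuclideanSpace ℝ (Fin (d + 1)))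
    (hpres : ∀ x y, lorentzForm d (G x) (G y) = lorentzForm d x y)
    (horient : 0 < G (EuclideanSpace.single (Fin.last d) 1) (Fin.last d))
    (ρ : ℝ) (hρ : 0 ≤ ρ)
    (hdist : Real.cosh ρ =
      - lorentzForm d (EuclideanSpace.single (Fin.last d) 1)
          (G (EuclideanSpace.single (Fin.last d) 1))) :
    Real.exp ρ ≤ ‖G‖ :=
  lorentz_isometry_norm_lower_bound_general d G hpres ρ hdist
end

section
/- Let h : I → ℝ be a continuous positive function on a connected, locally connected topological space I attaining its lower bound at v ∈ I. Define λ(y,z) = sup{λ ≤ min(h(y),h(z)) : C_{y,λ} = C_{z,λ}}, where C_{x,λ} is the connected component of {h ≥ λ} containing x. Then d(x,y) = h(x) + h(y) − 2λ(x,y) is a pseudometric on I, and the quotient metric space (Ĩ, d) is an ℝ-tree. -/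
open Set

universe u

/-- `C_{x,λ}`: the connected component of `x` in `{y : h y ≥ λ}`. -/
def contourComp {I : Type u} [TopologicalSpace I] (h : I → ℝ) (x : I) (l : ℝ) : Set I :=
  connectedComponentIn {y | l ≤ h y} x

/-- `λ(y,z) = sup{λ ≤ min(h y, h z) : C_{y,λ} = C_{z,λ}}`. -/
noncomputable def contourLam {I : Type u} [TopologicalSpace I] (h : I → ℝ) (y z : I) : ℝ :=
  sSup {l : ℝ | l ≤ min (h y) (h z) ∧ contourComp h y l = contourComp h z l}

/-- An `ℝ`-tree: a metric space that is uniquely arcwise connected, with the arc between any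
two points isometric to a real interval.  Here, for all `x y` there is a map `f` isometric
from `[0, dist x y]` onto an arc from `x` to `y`, and any injective continuous path from `x`
to `y` has the same image as this arc. -/
def IsRTree (T : Type u) [MetricSpace T] : Prop :=
  ∀ x y : T, ∃ f : ℝ → T,
    (∀ a ∈ Set.Icc 0 (dist x y), ∀ b ∈ Set.Icc 0 (dist x y), dist (f a) (f b) = |a - b|) ∧
    f 0 = x ∧ f (dist x y) = y ∧
    ∀ (γ : ℝ → T) (u v : ℝ), u ≤ v → ContinuousOn γ (Set.Icc u v) →
      γ u = x → γ v = y → Set.InjOn γ (Set.Icc u v) →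
      γ '' Set.Icc u v = f '' Set.Icc 0 (dist x y)

/-!
The merge level `λ` satisfies `λ ≤ min h` and the ultrametric inequality
`min (λ x z) (λ z y) ≤ λ x y`, because the components of a superlevel set partition it; this gives
the triangle inequality for `d`. Moreover every level `l` between `min h` and `h x` is attained
below `x`: some `p` has `h p = λ(x,p) = l`, since otherwise the component `C_{x,l}` would be
clopen (this is where local connectedness enters).

In the metric quotient these properties say that `λ` is the merge level of a tree: the points `p`
with `λ(x,p) = h p` form the branch below `x`, and the metric segment from `x` to `y` is the union
of the two branches down to the level `λ(x,y)`, parametrised isometrically by height. A point `p`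
of the branch of `a` at or below the merge level of `a` and `b` separates `a` from `b`. Hence every
path from `x` to `y` covers the segment, and an injective one cannot leave it, since it would have
to come back through the point where it left.
-/

theorem Set.InjOn.image_Icc_inter_image_Icc {α β : Type*} [PartialOrder α] {f : α → β}
    {a b t : α} (hf : InjOn f (Icc a b)) (ht : t ∈ Icc a b) :
    f '' Icc a t ∩ f '' Icc t b = {f t} := by
  refine Subset.antisymm ?_ (singleton_subset_iff.2
    ⟨⟨t, right_mem_Icc.2 ht.1, rfl⟩, ⟨t, left_mem_Icc.2 ht.2, rfl⟩⟩)
  rintro _ ⟨⟨t₁, ht₁, rfl⟩, ⟨t₂, ht₂, he⟩⟩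
  have h₁₂ : t₁ = t₂ :=
    hf ⟨ht₁.1, ht₁.2.trans ht.2⟩ ⟨ht.1.trans ht₂.1, ht₂.2⟩ he.symm
  rw [le_antisymm ht₁.2 (h₁₂ ▸ ht₂.1)]
  rfl

section MetricSegment

variable {T : Type*}

def metricSegment [PseudoMetricSpace T] (x y : T) : Set T :=
  {z | dist x z + dist z y = dist x y}

theorem exists_isometry_metricSegment [MetricSpace T] {x y : T}
    (hlin : ∀ p ∈ metricSegment x y, ∀ q ∈ metricSegment x y,
      dist p q = |dist x p - dist x q|)
    (hfull : ∀ t ∈ Icc 0 (dist x y), ∃ z ∈ metricSegment x y, dist x z = t) :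
    ∃ f : ℝ → T,
      (∀ a ∈ Icc 0 (dist x y), ∀ b ∈ Icc 0 (dist x y), dist (f a) (f b) = |a - b|) ∧
      f 0 = x ∧ f (dist x y) = y ∧ f '' Icc 0 (dist x y) = metricSegment x y := by
  have : Nonempty T := ⟨x⟩
  choose! f hfS hfx using hfull
  have hS : ∀ z ∈ metricSegment x y, dist x z ∈ Icc 0 (dist x y) := fun z hz =>
    ⟨dist_nonneg, hz ▸ le_add_of_nonneg_right dist_nonneg⟩
  have hf_eq : ∀ z ∈ metricSegment x y, f (dist x z) = z := fun z hz => by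
    rw [← dist_eq_zero, hlin _ (hfS _ (hS z hz)) _ hz, hfx _ (hS z hz), sub_self, abs_zero]
  refine ⟨f, fun a ha b hb => by rw [hlin _ (hfS a ha) _ (hfS b hb), hfx a ha, hfx b hb],
    ?_, hf_eq y (by simp [metricSegment]), ?_⟩
  · rw [← dist_eq_zero.1 (hfx 0 ⟨le_rfl, dist_nonneg⟩)]
  · exact Subset.antisymm (image_subset_iff.2 hfS) fun z hz => ⟨dist x z, hS z hz, hf_eq z hz⟩

end MetricSegment

/-- `H` is a height and `L x y` the height at which `x` and `y` merge, so that `L x p = H p`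
says that `p` lies on the descending branch of `x`. -/
structure IsMergeTree {T : Type*} [MetricSpace T] (H : T → ℝ) (L : T → T → ℝ) : Prop where
  dist_eq : ∀ x y, dist x y = H x + H y - 2 * L x y
  lam_le_right : ∀ x y, L x y ≤ H y
  min_lam_le : ∀ x y z, min (L x z) (L z y) ≤ L x y
  exists_lam_eq : ∀ x y l, L x y ≤ l → l ≤ H x → ∃ p, H p = l ∧ L x p = l

namespace IsMergeTree

variable {T : Type*} [MetricSpace T] {H : T → ℝ} {L : T → T → ℝ} (hT : IsMergeTree H L)
include hT

theorem lam_comm (x y : T) : L x y = L y x := by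
  have := hT.dist_eq y x
  rw [dist_comm, hT.dist_eq] at this
  linarith

theorem lam_self (x : T) : L x x = H x := by
  have := hT.dist_eq x x
  rw [dist_self] at this
  linarith

theorem lam_le_left (x y : T) : L x y ≤ H x :=
  hT.lam_comm x y ▸ hT.lam_le_right y x

theorem eq_of_le_lam {x y : T} (hx : H x ≤ L x y) (hy : H y ≤ L x y) : x = y := by
  refine dist_le_zero.1 ?_
  rw [hT.dist_eq]
  linarith

theorem lipschitzWith_height : LipschitzWith 1 H :=
  LipschitzWith.of_le_add fun x y => by
    rw [hT.dist_eq]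
    linarith [hT.lam_le_right x y]

theorem continuous_lam_left (a : T) : Continuous (L · a) := by
  have hL : (L · a) = fun z => (H z + H a - dist z a) / 2 := by
    funext z
    rw [hT.dist_eq]
    ring
  rw [hL]
  exact ((hT.lipschitzWith_height.continuous.add continuous_const).sub
    (continuous_id.dist continuous_const)).div_const 2

theorem lam_eq_of_lam_eq_height {a b p : T} (hbp : L b p = H p) (hab : L a b ≤ H p) :
    L a p = L a b := by
  refine le_antisymm ?_ (le_trans (le_min le_rfl (hbp ▸ hab)) (hT.min_lam_le a p b))
  have := hT.min_lam_le a b p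
  rwa [hT.lam_comm p b, hbp, min_eq_left (hT.lam_le_right a p)] at this

theorem dist_eq_abs_of_lam_eq_height {w p q : T} (hp : L w p = H p) (hq : L w q = H q) :
    dist p q = |H p - H q| := by
  rcases le_total (H p) (H q) with hpq | hqp
  · have hL : L p q = H p := by
      rw [hT.lam_eq_of_lam_eq_height hq (by rwa [hT.lam_comm, hp]), hT.lam_comm, hp]
    rw [hT.dist_eq, hL, abs_of_nonpos (by linarith)]
    ring
  · have hL : L q p = H q := by
      rw [hT.lam_eq_of_lam_eq_height hp (by rwa [hT.lam_comm, hq]), hT.lam_comm, hq]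
    rw [hT.dist_eq, hT.lam_comm, hL, abs_of_nonneg (by linarith)]
    ring

theorem dist_eq_sub_of_lam_eq_height {x y p q : T} (hp : L x p = H p)
    (hq : L y q = H q) (hxp : L x y ≤ H p) (hyq : L x y ≤ H q) :
    dist p q = H p + H q - 2 * L x y := by
  have hpy : L p y = L x y := by
    rw [hT.lam_comm, hT.lam_eq_of_lam_eq_height hp (by rwa [hT.lam_comm]), hT.lam_comm]
  rw [hT.dist_eq, hT.lam_eq_of_lam_eq_height hq (hpy ▸ hyq), hpy]

/-- The geodesic from a point `w` merging with `a` above `p` to a point `z` merging with `a` at or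
below `p` passes through `p`. -/
theorem dist_le_dist_of_separates {a p w z : T} (hap : L a p = H p) (hw : H p < L w a)
    (hz : L z a ≤ H p) : dist z p ≤ dist w z := by
  have hwp : H p ≤ L w p := le_trans (le_min hw.le hap.ge) (hT.min_lam_le w p a)
  have hzw : L z w ≤ L z a :=
    (min_le_iff.1 (hT.min_lam_le z a w)).resolve_right (by linarith)
  have hzp : L z w ≤ L z p := by
    have := hT.min_lam_le z p w
    rwa [min_eq_left (by linarith)] at this
  rw [hT.dist_eq, hT.dist_eq, hT.lam_comm w z]
  linarith [hT.lam_le_left w a]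

/-- Removing `p` separates the points merging with `a` above `H p` from the other points. -/
theorem mem_of_isPreconnected {S : Set T} (hS : IsPreconnected S) {a b p : T} (ha : a ∈ S)
    (hb : b ∈ S) (hap : L a p = H p) (hab : L a b ≤ H p) : p ∈ S := by
  by_contra hpS
  have hU : IsOpen {z | H p < L z a} := isOpen_lt continuous_const (hT.continuous_lam_left a)
  have hV : IsOpen {z | L z a ≤ H p ∧ z ≠ p} := by
    refine Metric.isOpen_iff.2 fun z hz => ⟨dist z p, dist_pos.2 hz.2, fun w hw => ?_⟩
    rw [Metric.mem_ball] at hw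
    refine ⟨not_lt.1 fun hwa => (hT.dist_le_dist_of_separates hap hwa hz.1).not_gt hw, ?_⟩
    rintro rfl
    exact (dist_comm z w ▸ hw).false
  have hUV : Disjoint {z | H p < L z a} {z | L z a ≤ H p ∧ z ≠ p} :=
    disjoint_left.2 fun z hzU hzV => hzV.1.not_gt hzU
  have hSUV : S ⊆ {z | H p < L z a} ∪ {z | L z a ≤ H p ∧ z ≠ p} := fun z hz =>
    (lt_or_ge (H p) (L z a)).imp id fun h => ⟨h, ne_of_mem_of_not_mem hz hpS⟩
  have haU : H p < L a a := by
    refine lt_of_not_ge fun haa => ne_of_mem_of_not_mem ha hpS (hT.eq_of_le_lam ?_ hap.ge)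
    rw [hap, ← hT.lam_self a]
    exact haa
  have hbU := hS.subset_left_of_subset_union hU hV hUV hSUV ⟨a, ha, haU⟩ hb
  exact hbU.not_ge (hT.lam_comm b a ▸ hab)

theorem mem_metricSegment_iff {x y z : T} :
    z ∈ metricSegment x y ↔ L x y ≤ H z ∧ (L x z = H z ∨ L y z = H z) := by
  have hxz := hT.lam_le_right x z
  have hzy := hT.lam_le_left z y
  have hz := hT.min_lam_le x y z
  have hx := hT.min_lam_le z y x
  have hy := hT.min_lam_le x z y
  rw [hT.lam_comm z x] at hx
  rw [hT.lam_comm y z] at hy ⊢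
  simp only [metricSegment, mem_ofPred_eq, hT.dist_eq]
  rw [min_le_iff] at hz hx hy
  constructor
  · intro h
    rcases hz with hz | hz
    · exact ⟨by linarith, Or.inr (by linarith)⟩
    · exact ⟨by linarith, Or.inl (by linarith)⟩
  · rintro ⟨hm, hxz' | hzy'⟩
    · rcases hx with hx | hx <;> rcases hz with hz | hz <;> linarith
    · rcases hy with hy | hy <;> rcases hz with hz | hz <;> linarith

theorem dist_eq_abs_of_mem_metricSegment {x y p q : T} (hp : p ∈ metricSegment x y)
    (hq : q ∈ metricSegment x y) : dist p q = |dist x p - dist x q| := by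
  have hdx : ∀ {z}, L x z = H z → dist x z = H x - H z := fun hz => by
    rw [hT.dist_eq, hz]
    ring
  have hdy : ∀ {z}, L y z = H z → L x y ≤ H z → dist x z = H x + H z - 2 * L x y :=
    fun hz hzm =>
      hT.dist_eq_sub_of_lam_eq_height (hT.lam_self x) hz (hT.lam_le_left x y) hzm
  rw [hT.mem_metricSegment_iff] at hp hq
  obtain ⟨hpm, hpx | hpy⟩ := hp <;> obtain ⟨hqm, hqx | hqy⟩ := hq
  · rw [hT.dist_eq_abs_of_lam_eq_height hpx hqx, hdx hpx, hdx hqx, abs_sub_comm]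
    ring_nf
  · rw [hT.dist_eq_sub_of_lam_eq_height hpx hqy hpm hqm, hdx hpx, hdy hqy hqm,
      abs_of_nonpos (by linarith)]
    ring
  · rw [dist_comm, hT.dist_eq_sub_of_lam_eq_height hqx hpy hqm hpm, hdx hqx,
      hdy hpy hpm, abs_of_nonneg (by linarith)]
    ring
  · rw [hT.dist_eq_abs_of_lam_eq_height hpy hqy, hdy hpy hpm, hdy hqy hqm]
    ring_nf

theorem exists_mem_metricSegment_dist_eq {x y : T} {t : ℝ} (ht : t ∈ Icc 0 (dist x y)) :
    ∃ z ∈ metricSegment x y, dist x z = t := by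
  have hxy : L x y ≤ H x := hT.lam_le_left x y
  have hd := hT.dist_eq x y
  rcases le_total t (H x - L x y) with hta | hat
  · obtain ⟨z, hz, hxz⟩ := hT.exists_lam_eq x y (H x - t) (by linarith) (by linarith [ht.1])
    refine ⟨z, hT.mem_metricSegment_iff.2 ⟨by linarith, Or.inl (hxz.trans hz.symm)⟩, ?_⟩
    rw [hT.dist_eq, hz, hxz]
    ring
  · obtain ⟨z, hz, hyz⟩ := hT.exists_lam_eq y x (t - H x + 2 * L x y)
      (by rw [hT.lam_comm]; linarith) (by linarith [ht.2])
    have hzm : L x y ≤ H z := by linarith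
    refine ⟨z, hT.mem_metricSegment_iff.2 ⟨hzm, Or.inr (hyz.trans hz.symm)⟩, ?_⟩
    rw [hT.dist_eq_sub_of_lam_eq_height (hT.lam_self x) (hyz.trans hz.symm) hxy hzm, hz]
    ring

theorem exists_ne_forall_mem_of_notMem_metricSegment {x y z : T}
    (hz : z ∉ metricSegment x y) : ∃ q ≠ z,
      (∀ S, IsPreconnected S → z ∈ S → x ∈ S → q ∈ S) ∧
      (∀ S, IsPreconnected S → z ∈ S → y ∈ S → q ∈ S) := by
  rw [hT.mem_metricSegment_iff, not_and_or, not_le, not_or] at hz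
  rcases lt_or_ge (H z) (L x y) with hzm | hmz
  · -- the merge point of `x` and `y`
    obtain ⟨q, hq, hxq⟩ := hT.exists_lam_eq x y (L x y) le_rfl (hT.lam_le_left x y)
    replace hxq : L x q = H q := hxq.trans hq.symm
    have hyq : L y q = H q := by
      rw [hT.lam_eq_of_lam_eq_height hxq (by rw [hT.lam_comm, hq]), hT.lam_comm, hq]
    refine ⟨q, fun hqz => hzm.ne (hqz ▸ hq), fun S hS hzS hxS => ?_, fun S hS hzS hyS => ?_⟩
    · exact hT.mem_of_isPreconnected hS hxS hzS hxq (by linarith [hT.lam_le_right x z])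
    · exact hT.mem_of_isPreconnected hS hyS hzS hyq (by linarith [hT.lam_le_right y z])
  · -- the point where `z` branches off the segment
    have hxz : L z x < H z := hT.lam_comm x z ▸
      (hT.lam_le_right x z).lt_of_ne ((hz.resolve_left hmz.not_gt).1)
    have hyz : L z y < H z := hT.lam_comm y z ▸
      (hT.lam_le_right y z).lt_of_ne ((hz.resolve_left hmz.not_gt).2)
    obtain ⟨q, hq, hzq⟩ := hT.exists_lam_eq z x (max (L z x) (L z y)) (le_max_left _ _)
      (max_le hxz.le hyz.le)
    refine ⟨q, fun hqz => (max_lt hxz hyz).ne (hq ▸ hqz ▸ rfl), fun S hS hzS hxS => ?_,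
      fun S hS hzS hyS => ?_⟩
    · exact hT.mem_of_isPreconnected hS hzS hxS (hzq.trans hq.symm) (hq ▸ le_max_left _ _)
    · exact hT.mem_of_isPreconnected hS hzS hyS (hzq.trans hq.symm) (hq ▸ le_max_right _ _)

theorem image_Icc_eq_metricSegment {γ : ℝ → T} {u v : ℝ} (huv : u ≤ v)
    (hγ : ContinuousOn γ (Icc u v)) (hinj : InjOn γ (Icc u v)) :
    γ '' Icc u v = metricSegment (γ u) (γ v) := by
  refine Subset.antisymm ?_ fun z hz => ?_
  · rintro _ ⟨t, ht, rfl⟩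
    by_contra hz
    obtain ⟨q, hqz, hqu, hqv⟩ := hT.exists_ne_forall_mem_of_notMem_metricSegment hz
    refine hqz (eq_of_mem_singleton (hinj.image_Icc_inter_image_Icc ht ▸ ⟨?_, ?_⟩))
    · exact hqu _ (isPreconnected_Icc.image γ (hγ.mono (Icc_subset_Icc le_rfl ht.2)))
        ⟨t, right_mem_Icc.2 ht.1, rfl⟩ ⟨u, left_mem_Icc.2 ht.1, rfl⟩
    · exact hqv _ (isPreconnected_Icc.image γ (hγ.mono (Icc_subset_Icc ht.1 le_rfl)))
        ⟨t, left_mem_Icc.2 ht.2, rfl⟩ ⟨v, right_mem_Icc.2 ht.2, rfl⟩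
  · have hS := isPreconnected_Icc.image γ hγ
    have hu : γ u ∈ γ '' Icc u v := ⟨u, left_mem_Icc.2 huv, rfl⟩
    have hv : γ v ∈ γ '' Icc u v := ⟨v, right_mem_Icc.2 huv, rfl⟩
    obtain ⟨hm, hu' | hv'⟩ := hT.mem_metricSegment_iff.1 hz
    · exact hT.mem_of_isPreconnected hS hu hv hu' hm
    · exact hT.mem_of_isPreconnected hS hv hu hv' (hT.lam_comm (γ u) (γ v) ▸ hm)

theorem isRTree : IsRTree T := by
  intro x y
  obtain ⟨f, hiso, hf0, hfd, hfS⟩ := exists_isometry_metricSegment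
    (fun p hp q hq => hT.dist_eq_abs_of_mem_metricSegment hp hq)
    (fun t ht => hT.exists_mem_metricSegment_dist_eq ht)
  refine ⟨f, hiso, hf0, hfd, fun γ u v huv hγ hu hv hinj => ?_⟩
  rw [hfS, ← hu, ← hv]
  exact hT.image_Icc_eq_metricSegment huv hγ hinj

end IsMergeTree

theorem sub_two_mul_lam_triangle {X : Type*} {h : X → ℝ} {lam : X → X → ℝ}
    (hle : ∀ x y, lam x y ≤ min (h x) (h y))
    (hmin : ∀ x y z, min (lam x z) (lam z y) ≤ lam x y) (x y z : X) :
    h x + h y - 2 * lam x y ≤ (h x + h z - 2 * lam x z) + (h z + h y - 2 * lam z y) := by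
  have hmax : max (lam x z) (lam z y) ≤ h z :=
    max_le ((hle x z).trans (min_le_right _ _)) ((hle z y).trans (min_le_left _ _))
  linarith [min_add_max (lam x z) (lam z y), hmin x y z]

theorem exists_metricSpace_quotient {X : Type u} (d : X → X → ℝ) (hself : ∀ x, d x x = 0)
    (hcomm : ∀ x y, d x y = d y x) (htri : ∀ x y z, d x z ≤ d x y + d y z) :
    ∃ (T : Type u) (_ : MetricSpace T) (q : X → T),
      Function.Surjective q ∧ ∀ x y, dist (q x) (q y) = d x y := by
  let : PseudoMetricSpace X :=
    { dist := d, dist_self := hself, dist_comm := hcomm, dist_triangle := htri }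
  exact ⟨SeparationQuotient X, inferInstance, SeparationQuotient.mk,
    SeparationQuotient.surjective_mk, SeparationQuotient.dist_mk⟩

theorem exists_isMergeTree_of_surjective {X T : Type*} [MetricSpace T] {q : X → T}
    (hq : Function.Surjective q) {h : X → ℝ} {lam : X → X → ℝ}
    (hdist : ∀ x y, dist (q x) (q y) = h x + h y - 2 * lam x y)
    (hle : ∀ x y, lam x y ≤ min (h x) (h y))
    (hmin : ∀ x y z, min (lam x z) (lam z y) ≤ lam x y)
    (hanc : ∀ x y l, lam x y ≤ l → l ≤ h x → ∃ p, h p = l ∧ lam x p = l) :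
    ∃ (H : T → ℝ) (L : T → T → ℝ), IsMergeTree H L := by
  have hfac : h.FactorsThrough q := fun x y hxy => by
    have hd := hdist x y
    rw [hxy, dist_self] at hd
    linarith [le_min_iff.1 (hle x y)]
  set H := Function.extend q h 0
  have hH : ∀ x, H (q x) = h x := hfac.extend_apply 0
  have hL : ∀ x y, (H (q x) + H (q y) - dist (q x) (q y)) / 2 = lam x y := fun x y => by
    rw [hH, hH, hdist]
    ring
  refine ⟨H, fun s t => (H s + H t - dist s t) / 2, ⟨fun s t => by ring, ?_, ?_, ?_⟩⟩
  · refine hq.forall₂.2 fun x y => ?_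
    rw [hL, hH]
    exact (hle x y).trans (min_le_right _ _)
  · refine hq.forall₃.2 fun x y z => ?_
    simp only [hL]
    exact hmin x y z
  · refine hq.forall₂.2 fun x y l hl hlx => ?_
    rw [hL] at hl
    rw [hH] at hlx
    obtain ⟨p, hp, hxp⟩ := hanc x y l hl hlx
    exact ⟨q p, by rw [hH, hp], by rw [hL, hxp]⟩

theorem IsClosed.connectedComponentIn {X : Type*} [TopologicalSpace X] {F : Set X}
    (hF : IsClosed F) (x : X) : IsClosed (connectedComponentIn F x) := by
  by_cases hx : x ∈ F
  · rw [connectedComponentIn_eq_image hx]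
    exact hF.isClosedEmbedding_subtypeVal.isClosedMap _ isClosed_connectedComponent
  · rw [connectedComponentIn_eq_empty hx]
    exact isClosed_empty

section Contour

variable {I : Type u} [TopologicalSpace I] {h : I → ℝ}

-- `contourLam h x y` is `sSup (contourMergeLevels h x y)` by definition.
def contourMergeLevels (h : I → ℝ) (x y : I) : Set ℝ :=
  {l | l ≤ min (h x) (h y) ∧ contourComp h x l = contourComp h y l}

theorem bddAbove_contourMergeLevels (x y : I) : BddAbove (contourMergeLevels h x y) :=
  ⟨min (h x) (h y), fun _ hl => hl.1⟩

theorem mem_contourMergeLevels_of_le_of_mem {x y : I} {l l' : ℝ} (hl' : l' ≤ l)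
    (hl : l ∈ contourMergeLevels h x y) : l' ∈ contourMergeLevels h x y := by
  have hy : y ∈ contourComp h x l :=
    hl.2 ▸ mem_connectedComponentIn (hl.1.trans (min_le_right _ _))
  exact ⟨hl'.trans hl.1,
    connectedComponentIn_eq (connectedComponentIn_mono _ (fun z hz => hl'.trans hz) hy)⟩

theorem contourLam_comm (x y : I) : contourLam h x y = contourLam h y x := by
  simp only [contourLam, min_comm (h x), eq_comm]

theorem contourLam_eq_of_mem_contourComp {x p : I} (hp : p ∈ contourComp h x (h p))
    (hpx : h p ≤ h x) : contourLam h x p = h p :=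
  IsGreatest.csSup_eq ⟨⟨le_min hpx le_rfl, connectedComponentIn_eq hp⟩,
    fun _ hl => hl.1.trans (min_le_right _ _)⟩

theorem contourLam_self (x : I) : contourLam h x x = h x :=
  contourLam_eq_of_mem_contourComp (mem_connectedComponentIn (le_refl (h x))) le_rfl

variable [PreconnectedSpace I] {v : I}

theorem mem_contourMergeLevels_of_forall_le (hmin : ∀ y, h v ≤ h y) (x y : I) :
    h v ∈ contourMergeLevels h x y := by
  have huniv : {z | h v ≤ h z} = univ := eq_univ_of_forall hmin
  refine ⟨le_min (hmin x) (hmin y), ?_⟩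
  simp only [contourComp, huniv, connectedComponentIn_univ,
    PreconnectedSpace.connectedComponent_eq_univ]

theorem le_contourLam (hmin : ∀ y, h v ≤ h y) (x y : I) : h v ≤ contourLam h x y :=
  le_csSup (bddAbove_contourMergeLevels x y) (mem_contourMergeLevels_of_forall_le hmin x y)

theorem contourLam_le_min (hmin : ∀ y, h v ≤ h y) (x y : I) :
    contourLam h x y ≤ min (h x) (h y) :=
  csSup_le ⟨_, mem_contourMergeLevels_of_forall_le hmin x y⟩ fun _ hl => hl.1

theorem mem_contourMergeLevels_of_lt (hmin : ∀ y, h v ≤ h y) {x y : I} {l : ℝ}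
    (hl : l < contourLam h x y) : l ∈ contourMergeLevels h x y := by
  obtain ⟨l', hl', hll'⟩ :=
    exists_lt_of_lt_csSup ⟨_, mem_contourMergeLevels_of_forall_le hmin x y⟩ hl
  exact mem_contourMergeLevels_of_le_of_mem hll'.le hl'

theorem min_contourLam_le (hmin : ∀ y, h v ≤ h y) (x y z : I) :
    min (contourLam h x z) (contourLam h z y) ≤ contourLam h x y := by
  refine le_of_forall_lt_imp_le_of_dense fun l hl => ?_
  obtain ⟨hxz, hzy⟩ := lt_min_iff.1 hl
  obtain ⟨hlxz, hCxz⟩ := mem_contourMergeLevels_of_lt hmin hxz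
  obtain ⟨hlzy, hCzy⟩ := mem_contourMergeLevels_of_lt hmin hzy
  exact le_csSup (bddAbove_contourMergeLevels x y)
    ⟨le_min (le_min_iff.1 hlxz).1 (le_min_iff.1 hlzy).2, hCxz.trans hCzy⟩

theorem exists_contourLam_eq [LocallyConnectedSpace I] (hc : Continuous h) {x z : I} {l : ℝ}
    (hz : h z ≤ l) (hx : l ≤ h x) : ∃ p, h p = l ∧ contourLam h x p = l := by
  suffices ∃ p ∈ contourComp h x l, h p = l by
    obtain ⟨p, hp, rfl⟩ := this
    exact ⟨p, rfl, contourLam_eq_of_mem_contourComp hp hx⟩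
  -- otherwise `C_{x,l}` lies in the open set `{h > l}`, hence is open as well as closed
  by_contra! hne
  have hlt : ∀ p ∈ contourComp h x l, l < h p := fun p hp =>
    (connectedComponentIn_subset {y | l ≤ h y} x hp : l ≤ h p).lt_of_ne (hne p hp).symm
  have hopen : IsOpen (contourComp h x l) := isOpen_iff_mem_nhds.2 fun p hp => by
    rw [contourComp, connectedComponentIn_eq hp]
    exact connectedComponentIn_mem_nhds (Filter.mem_of_superset
      ((isOpen_lt continuous_const hc).mem_nhds (hlt p hp)) fun _ hy => (le_of_lt hy : l ≤ h _))
  have huniv : contourComp h x l = univ := IsClopen.eq_univ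
    ⟨(isClosed_le continuous_const hc).connectedComponentIn x, hopen⟩
    ⟨x, mem_connectedComponentIn hx⟩
  exact (hlt z (huniv.symm ▸ mem_univ z)).not_ge hz

end Contour

theorem contour_pseudometric_rtree_general
    {I : Type u} [TopologicalSpace I] [ConnectedSpace I] [LocallyConnectedSpace I]
    (h : I → ℝ) (hc : Continuous h)
    (v : I) (hmin : ∀ x, h v ≤ h x) :
    (∀ x, h x + h x - 2 * contourLam h x x = 0) ∧
    (∀ x y, h x + h y - 2 * contourLam h x y = h y + h x - 2 * contourLam h y x) ∧
    (∀ x y, 0 ≤ h x + h y - 2 * contourLam h x y) ∧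
    (∀ x y z, h x + h y - 2 * contourLam h x y ≤
      (h x + h z - 2 * contourLam h x z) + (h z + h y - 2 * contourLam h z y)) ∧
    ∃ (T : Type u) (_ : MetricSpace T) (q : I → T), Function.Surjective q ∧
      (∀ x y, dist (q x) (q y) = h x + h y - 2 * contourLam h x y) ∧ IsRTree T := by
  have hle := contourLam_le_min hmin
  have hultra := min_contourLam_le hmin
  have hself : ∀ x, h x + h x - 2 * contourLam h x x = 0 := fun x => by
    rw [contourLam_self]
    ring
  have hcomm : ∀ x y, h x + h y - 2 * contourLam h x y = h y + h x - 2 * contourLam h y x :=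
    fun x y => by rw [contourLam_comm]; ring
  have htri := sub_two_mul_lam_triangle hle hultra
  obtain ⟨T, _, q, hq, hdist⟩ := exists_metricSpace_quotient _ hself hcomm
    fun x z y => htri x y z
  obtain ⟨H, L, hT⟩ := exists_isMergeTree_of_surjective hq hdist hle hultra
    fun x y l hl hlx => exists_contourLam_eq hc ((le_contourLam hmin x y).trans hl) hlx
  refine ⟨hself, hcomm, fun x y => ?_, htri, T, _, q, hq, hdist, hT.isRTree⟩
  linarith [le_min_iff.1 (hle x y)]

/-- Let `h : I → ℝ` be a continuous positive function on a connected,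
locally connected topological space, attaining its lower bound at `v`.  With
`λ(y,z) = sup{λ ≤ min(h y, h z) : C_{y,λ} = C_{z,λ}}` (components `C` of superlevel sets),
`d(x,y) = h x + h y − 2λ(x,y)` is a pseudometric on `I`, and the associated quotient metric
space is an `ℝ`-tree. -/
theorem contour_pseudometric_rtree
    {I : Type u} [TopologicalSpace I] [ConnectedSpace I] [LocallyConnectedSpace I]
    (h : I → ℝ) (hc : Continuous h) (hpos : ∀ x, 0 < h x)
    (v : I) (hmin : ∀ x, h v ≤ h x) :
    (∀ x, h x + h x - 2 * contourLam h x x = 0) ∧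
    (∀ x y, h x + h y - 2 * contourLam h x y = h y + h x - 2 * contourLam h y x) ∧
    (∀ x y, 0 ≤ h x + h y - 2 * contourLam h x y) ∧
    (∀ x y z, h x + h y - 2 * contourLam h x y ≤
      (h x + h z - 2 * contourLam h x z) + (h z + h y - 2 * contourLam h z y)) ∧
    ∃ (T : Type u) (_ : MetricSpace T) (q : I → T), Function.Surjective q ∧
      (∀ x y, dist (q x) (q y) = h x + h y - 2 * contourLam h x y) ∧ IsRTree T :=
  contour_pseudometric_rtree_general h hc v hmin
end
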